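/- arXiv:2310.04764 — 2 statements merged into one kernel-verified Lean document; each statement's English description precedes it below -/
import Mathlib

section
/- Let L be a set of graphs with no sources and τ a finite sort. For graphs G₁, G₂ whose sorts are contained in τ, G₁ and G₂ are syntactically congruent for L in the full HR graph algebra if and only if they are syntactically congruent for L in the finitely-sorted subalgebra G^τ. -/
set_option autoImplicit false

namespace GraphCF

noncomputable section

/-! ### Concrete graphs

A concrete graph over an alphabet `Lab` of edge labels (with arities `ar`):
vertices `Fin n`, edges `Fin m`, each edge carrying a label and the sequence of
attached vertices, and an assignment of the source labels in the sort `srt`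
(a finite set of natural numbers) to vertices.  Graphs in the paper are
isomorphism classes of concrete graphs; we work with concrete graphs together
with the isomorphism relation `GIso`. -/
structure CG (Lab : Type) (ar : Lab → ℕ) : Type where
  n : ℕ
  m : ℕ
  edg : Fin m → (a : Lab) × (Fin (ar a) → Fin n)
  srt : Finset ℕ
  src : {s : ℕ // s ∈ srt} → Fin n

variable {Lab : Type} {ar : Lab → ℕ}

instance quotFinite {α : Type} [Finite α] (r : α → α → Prop) : Finite (Quot r) :=
  Finite.of_surjective (Quot.mk r) fun q => Quot.exists_rep q

/-- The graph `0_τ` consisting only of sources, one for each label in `τ`. -/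
def czero (τ : Finset ℕ) : CG Lab ar where
  n := τ.card
  m := 0
  edg e := Fin.elim0 e
  srt := τ
  src s := τ.equivFin ⟨s.1, s.2⟩

/-- The single-edge graph `a_(s₁,…,s_k)`. -/
def cedge (a : Lab) (s : Fin (ar a) → ℕ) : CG Lab ar where
  n := (Finset.image s Finset.univ).card
  m := 1
  edg _ := ⟨a, fun i => (Finset.image s Finset.univ).equivFin
    ⟨s i, Finset.mem_image_of_mem s (Finset.mem_univ i)⟩⟩
  srt := Finset.image s Finset.univ
  src t := (Finset.image s Finset.univ).equivFin ⟨t.1, t.2⟩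

/-- Restriction of sources: keep only the source labels in `τ`. -/
def crestrict (τ : Finset ℕ) (G : CG Lab ar) : CG Lab ar where
  n := G.n
  m := G.m
  edg := G.edg
  srt := G.srt ∩ τ
  src s := G.src ⟨s.1, (Finset.mem_inter.mp s.2).1⟩

/-- Renaming of sources along a permutation `α`; the new sort is `α⁻¹(srt)`. -/
def crename (α : Equiv.Perm ℕ) (G : CG Lab ar) : CG Lab ar where
  n := G.n
  m := G.m
  edg := G.edg
  srt := G.srt.image (α.symm : ℕ → ℕ)
  src s := G.src ⟨α s.1, by
    obtain ⟨y, hy, he⟩ := Finset.mem_image.mp s.2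
    rw [← he, Equiv.apply_symm_apply]
    exact hy⟩

/-- The fusion relation used to define parallel composition: sources of the two
graphs carrying the same label are identified. -/
def fuseRel (G₁ G₂ : CG Lab ar) :
    (Fin G₁.n ⊕ Fin G₂.n) → (Fin G₁.n ⊕ Fin G₂.n) → Prop :=
  fun x y => ∃ (s : ℕ) (h₁ : s ∈ G₁.srt) (h₂ : s ∈ G₂.srt),
    x = Sum.inl (G₁.src ⟨s, h₁⟩) ∧ y = Sum.inr (G₂.src ⟨s, h₂⟩)

/-- Parallel composition `G₁ ∥ G₂`: disjoint union with fusion of equally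
labeled sources; the sort is the union of the sorts. -/
def ccomp (G₁ G₂ : CG Lab ar) : CG Lab ar :=
  let e := Finite.equivFin (Quot (fuseRel G₁ G₂))
  { n := Nat.card (Quot (fuseRel G₁ G₂))
    m := G₁.m + G₂.m
    edg := fun i =>
      match finSumFinEquiv.symm i with
      | Sum.inl e₁ => ⟨(G₁.edg e₁).1, fun j => e (Quot.mk _ (Sum.inl ((G₁.edg e₁).2 j)))⟩
      | Sum.inr e₂ => ⟨(G₂.edg e₂).1, fun j => e (Quot.mk _ (Sum.inr ((G₂.edg e₂).2 j)))⟩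
    srt := G₁.srt ∪ G₂.srt
    src := fun s =>
      if h : s.1 ∈ G₁.srt then e (Quot.mk _ (Sum.inl (G₁.src ⟨s.1, h⟩)))
      else e (Quot.mk _ (Sum.inr (G₂.src ⟨s.1, (Finset.mem_union.mp s.2).resolve_left h⟩))) }

theorem crestrict_srt (τ : Finset ℕ) (G : CG Lab ar) :
    (crestrict τ G).srt = G.srt ∩ τ := rfl

theorem crename_srt (α : Equiv.Perm ℕ) (G : CG Lab ar) :
    (crename α G).srt = G.srt.image (α.symm : ℕ → ℕ) := rfl

theorem ccomp_srt (G₁ G₂ : CG Lab ar) : (ccomp G₁ G₂).srt = G₁.srt ∪ G₂.srt := rfl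

/-- Isomorphism of concrete graphs. -/
def GIso (G₁ G₂ : CG Lab ar) : Prop :=
  G₁.srt = G₂.srt ∧
  ∃ (ev : Fin G₁.n ≃ Fin G₂.n) (ee : Fin G₁.m ≃ Fin G₂.m),
    (∀ e, (G₂.edg (ee e)).1 = (G₁.edg e).1 ∧
      HEq (G₂.edg (ee e)).2 (fun i => ev ((G₁.edg e).2 i))) ∧
    (∀ (s : ℕ) (h₁ : s ∈ G₁.srt) (h₂ : s ∈ G₂.srt),
      ev (G₁.src ⟨s, h₁⟩) = G₂.src ⟨s, h₂⟩)

def IsoClosed (L : Set (CG Lab ar)) : Prop :=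
  ∀ G₁ G₂ : CG Lab ar, GIso G₁ G₂ → G₁ ∈ L → G₂ ∈ L

def isoClosure (L : Set (CG Lab ar)) : Set (CG Lab ar) :=
  {G | ∃ G' ∈ L, GIso G' G}

/-- `α` is a `τ`-permutation: it fixes every label outside `τ`. -/
def IsTauPerm (τ : Finset ℕ) (α : Equiv.Perm ℕ) : Prop := ∀ x, x ∉ τ → α x = x

/-- Finite permutations of the source labels. -/
def IsFinPerm (α : Equiv.Perm ℕ) : Prop := ∃ τ : Finset ℕ, IsTauPerm τ α

theorem crename_srt_subset {τ : Finset ℕ} {α : Equiv.Perm ℕ} (hα : IsTauPerm τ α)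
    {G : CG Lab ar} (h : G.srt ⊆ τ) : (crename α G).srt ⊆ τ := by
  intro x hx
  obtain ⟨y, hy, he⟩ := Finset.mem_image.mp hx
  subst he
  by_contra hc
  have h1 := hα _ hc
  rw [Equiv.apply_symm_apply] at h1
  exact hc (h1 ▸ h hy)

/-! ### Ground HR terms -/

/-- Ground terms over the HR signature. -/
inductive HRT (Lab : Type) (ar : Lab → ℕ) : Type
  | zero (τ : Finset ℕ)
  | edge (a : Lab) (s : Fin (ar a) → ℕ)
  | restrict (τ : Finset ℕ) (t : HRT Lab ar)
  | rename (α : Equiv.Perm ℕ) (hα : IsFinPerm α) (t : HRT Lab ar)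
  | comp (t₁ t₂ : HRT Lab ar)

/-- The value of a ground HR term in the graph algebra. -/
def HRT.val : HRT Lab ar → CG Lab ar
  | .zero τ => czero τ
  | .edge a s => cedge a s
  | .restrict τ t => crestrict τ t.val
  | .rename α _ t => crename α t.val
  | .comp t₁ t₂ => ccomp t₁.val t₂.val

/-- The term uses only source labels from `τ`. -/
def HRT.usesOnly (τ : Finset ℕ) : HRT Lab ar → Prop
  | .zero τ' => τ' ⊆ τ
  | .edge _ s => ∀ i, s i ∈ τ
  | .restrict τ' t => τ' ⊆ τ ∧ t.usesOnly τ
  | .rename α _ t => IsTauPerm τ α ∧ t.usesOnly τ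
  | .comp t₁ t₂ => t₁.usesOnly τ ∧ t₂.usesOnly τ

/-- The set of graphs generated by ground terms over the `τ`-restricted
HR signature (up to isomorphism). -/
def genGraphs (Lab : Type) (ar : Lab → ℕ) (τ : Finset ℕ) : Set (CG Lab ar) :=
  {G | ∃ t : HRT Lab ar, t.usesOnly τ ∧ GIso t.val G}

/-! ### HR grammars -/

/-- HR terms with nonterminal (set) variables from `N`. -/
inductive HRTV (Lab : Type) (ar : Lab → ℕ) (N : Type) : Type
  | var (X : N)
  | zero (τ : Finset ℕ)
  | edge (a : Lab) (s : Fin (ar a) → ℕ)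
  | restrict (τ : Finset ℕ) (t : HRTV Lab ar N)
  | rename (α : Equiv.Perm ℕ) (hα : IsFinPerm α) (t : HRTV Lab ar N)
  | comp (t₁ t₂ : HRTV Lab ar N)

/-- Evaluation of a term with set variables, with regard to an assignment `S`
of sets of graphs to the nonterminals. -/
def HRTV.evalSet {N : Type} (S : N → Set (CG Lab ar)) : HRTV Lab ar N → Set (CG Lab ar)
  | .var X => S X
  | .zero τ => {czero τ}
  | .edge a s => {cedge a s}
  | .restrict τ t => crestrict τ '' t.evalSet S
  | .rename α _ t => crename α '' t.evalSet S
  | .comp t₁ t₂ => {G | ∃ G₁ ∈ t₁.evalSet S, ∃ G₂ ∈ t₂.evalSet S, G = ccomp G₁ G₂}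

def HRTV.usesOnly {N : Type} (τ : Finset ℕ) : HRTV Lab ar N → Prop
  | .var _ => True
  | .zero τ' => τ' ⊆ τ
  | .edge _ s => ∀ i, s i ∈ τ
  | .restrict τ' t => τ' ⊆ τ ∧ t.usesOnly τ
  | .rename α _ t => IsTauPerm τ α ∧ t.usesOnly τ
  | .comp t₁ t₂ => t₁.usesOnly τ ∧ t₂.usesOnly τ

/-- A grammar: a finite list of rules `X → t`. -/
abbrev Grammar (Lab : Type) (ar : Lab → ℕ) (N : Type) : Type := List (N × HRTV Lab ar N)

def IsSolution {N : Type} (Γ : Grammar Lab ar N) (S : N → Set (CG Lab ar)) : Prop :=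
  ∀ r ∈ Γ, HRTV.evalSet S r.2 ⊆ S r.1

/-- The component of the least solution of `Γ` at the nonterminal `X`
(the least solution is the pointwise intersection of all solutions). -/
def langOf {N : Type} (Γ : Grammar Lab ar N) (X : N) : Set (CG Lab ar) :=
  {G | ∀ S : N → Set (CG Lab ar), IsSolution Γ S → G ∈ S X}

/-- `L` is context-free for a grammar over the `τ`-restricted HR signature. -/
def ContextFreeT (Lab : Type) (ar : Lab → ℕ) (τ : Finset ℕ) (L : Set (CG Lab ar)) : Prop :=
  ∃ (N : Type) (_ : Finite N) (Γ : Grammar Lab ar N) (X : N),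
    (∀ r ∈ Γ, HRTV.usesOnly τ r.2) ∧ L = isoClosure (langOf Γ X)

/-- `L` is context-free: a component of the least solution of a grammar of
recursive equations over HR operations. -/
def ContextFree (Lab : Type) (ar : Lab → ℕ) (L : Set (CG Lab ar)) : Prop :=
  ∃ (N : Type) (_ : Finite N) (Γ : Grammar Lab ar N) (X : N),
    L = isoClosure (langOf Γ X)

/-! ### Contexts and the syntactic congruence of the HR algebra -/

/-- First-order HR contexts: terms built from a variable (`hole`), arbitrary
graph parameters (`const`) and the HR operations. -/
inductive HRCtx (Lab : Type) (ar : Lab → ℕ) : Type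
  | hole
  | const (G : CG Lab ar)
  | zero (τ : Finset ℕ)
  | edge (a : Lab) (s : Fin (ar a) → ℕ)
  | restrict (τ : Finset ℕ) (c : HRCtx Lab ar)
  | rename (α : Equiv.Perm ℕ) (hα : IsFinPerm α) (c : HRCtx Lab ar)
  | comp (c₁ c₂ : HRCtx Lab ar)

def HRCtx.apply : HRCtx Lab ar → CG Lab ar → CG Lab ar
  | .hole, G => G
  | .const H, _ => H
  | .zero τ, _ => czero τ
  | .edge a s, _ => cedge a s
  | .restrict τ c, G => crestrict τ (c.apply G)
  | .rename α _ c, G => crename α (c.apply G)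
  | .comp c₁ c₂, G => ccomp (c₁.apply G) (c₂.apply G)

/-- The syntactic congruence of `L` in the HR graph algebra. -/
def SynCongHR (L : Set (CG Lab ar)) (G₁ G₂ : CG Lab ar) : Prop :=
  G₁.srt = G₂.srt ∧ ∀ c : HRCtx Lab ar, (c.apply G₁ ∈ L ↔ c.apply G₂ ∈ L)

/-- The context uses only source labels from `τ` (and parameters of sort `⊆ τ`). -/
def HRCtx.usesOnly (τ : Finset ℕ) : HRCtx Lab ar → Prop
  | .hole => True
  | .const G => G.srt ⊆ τ
  | .zero τ' => τ' ⊆ τ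
  | .edge _ s => ∀ i, s i ∈ τ
  | .restrict τ' c => τ' ⊆ τ ∧ c.usesOnly τ
  | .rename α _ c => IsTauPerm τ α ∧ c.usesOnly τ
  | .comp c₁ c₂ => c₁.usesOnly τ ∧ c₂.usesOnly τ

/-- The syntactic congruence of `L` in the finitely-sorted subalgebra `G^τ`. -/
def SynCongHRT (τ : Finset ℕ) (L : Set (CG Lab ar)) (G₁ G₂ : CG Lab ar) : Prop :=
  G₁.srt = G₂.srt ∧
  ∀ c : HRCtx Lab ar, c.usesOnly τ → (c.apply G₁ ∈ L ↔ c.apply G₂ ∈ L)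

/-! ### Congruence-based recognizability in the HR algebra -/

/-- A congruence of the HR graph algebra (on concrete graphs; it must contain
graph isomorphism, respect sorts and be compatible with all HR operations). -/
structure HRCongruence (Lab : Type) (ar : Lab → ℕ) : Type 1 where
  rel : CG Lab ar → CG Lab ar → Prop
  iseqv : Equivalence rel
  iso_le : ∀ G₁ G₂, GIso G₁ G₂ → rel G₁ G₂
  srt_eq : ∀ G₁ G₂, rel G₁ G₂ → G₁.srt = G₂.srt
  restrict_compat : ∀ (τ : Finset ℕ) G₁ G₂, rel G₁ G₂ →
    rel (crestrict τ G₁) (crestrict τ G₂)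
  rename_compat : ∀ (α : Equiv.Perm ℕ), IsFinPerm α → ∀ G₁ G₂, rel G₁ G₂ →
    rel (crename α G₁) (crename α G₂)
  comp_compat : ∀ G₁ G₂ H₁ H₂, rel G₁ H₁ → rel G₂ H₂ →
    rel (ccomp G₁ G₂) (ccomp H₁ H₂)

/-- Locally finite: finitely many classes of each sort. -/
def HRCongruence.LocFin (C : HRCongruence Lab ar) : Prop :=
  ∀ τ : Finset ℕ,
    Finite (Quot (fun a b : {G : CG Lab ar // G.srt = τ} => C.rel a.1 b.1))

def HRCongruence.Saturates (C : HRCongruence Lab ar) (L : Set (CG Lab ar)) : Prop :=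
  ∀ G₁ G₂, C.rel G₁ G₂ → (G₁ ∈ L ↔ G₂ ∈ L)

/-- `L` is recognizable in the HR graph algebra: saturated by a locally finite
congruence. -/
def RecogHR (L : Set (CG Lab ar)) : Prop :=
  ∃ C : HRCongruence Lab ar, C.Saturates L ∧ C.LocFin

/-- graphs of sort included in `τ` -/
abbrev CGT (Lab : Type) (ar : Lab → ℕ) (τ : Finset ℕ) : Type :=
  {G : CG Lab ar // G.srt ⊆ τ}

def subRestrict {τ : Finset ℕ} (τ' : Finset ℕ) (G : CGT Lab ar τ) : CGT Lab ar τ :=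
  ⟨crestrict τ' G.1, by rw [crestrict_srt]; exact Finset.Subset.trans Finset.inter_subset_left G.2⟩

def subRename {τ : Finset ℕ} (α : Equiv.Perm ℕ) (hα : IsTauPerm τ α)
    (G : CGT Lab ar τ) : CGT Lab ar τ :=
  ⟨crename α G.1, crename_srt_subset hα G.2⟩

def subComp {τ : Finset ℕ} (G₁ G₂ : CGT Lab ar τ) : CGT Lab ar τ :=
  ⟨ccomp G₁.1 G₂.1, by rw [ccomp_srt]; exact Finset.union_subset G₁.2 G₂.2⟩

/-- A congruence of the finitely-sorted subalgebra `G^τ`. -/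
structure HRCongruenceT (Lab : Type) (ar : Lab → ℕ) (τ : Finset ℕ) : Type 1 where
  rel : CGT Lab ar τ → CGT Lab ar τ → Prop
  iseqv : Equivalence rel
  iso_le : ∀ G₁ G₂ : CGT Lab ar τ, GIso G₁.1 G₂.1 → rel G₁ G₂
  srt_eq : ∀ G₁ G₂ : CGT Lab ar τ, rel G₁ G₂ → G₁.1.srt = G₂.1.srt
  restrict_compat : ∀ (τ' : Finset ℕ), τ' ⊆ τ → ∀ G₁ G₂, rel G₁ G₂ →
    rel (subRestrict τ' G₁) (subRestrict τ' G₂)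
  rename_compat : ∀ (α : Equiv.Perm ℕ) (hα : IsTauPerm τ α), ∀ G₁ G₂, rel G₁ G₂ →
    rel (subRename α hα G₁) (subRename α hα G₂)
  comp_compat : ∀ G₁ G₂ H₁ H₂, rel G₁ H₁ → rel G₂ H₂ →
    rel (subComp G₁ G₂) (subComp H₁ H₂)

/-- `L` is recognizable in the finitely-sorted subalgebra `G^τ`: saturated by a
congruence of `G^τ` with finitely many classes. -/
def RecogHRT (τ : Finset ℕ) (L : Set (CG Lab ar)) : Prop :=
  ∃ C : HRCongruenceT Lab ar τ,
    (∀ G₁ G₂ : CGT Lab ar τ, C.rel G₁ G₂ → (G₁.1 ∈ L ↔ G₂.1 ∈ L)) ∧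
    Finite (Quot C.rel)

/-! ### Tree decompositions and tree-width -/

/-- A tree decomposition of a concrete graph `G`. -/
structure TreeDecomp (G : CG Lab ar) : Type 1 where
  ι : Type
  finι : Finite ι
  T : SimpleGraph ι
  isTree : T.IsTree
  root : ι
  bag : ι → Finset (Fin G.n)
  edges_covered : ∀ e : Fin G.m, ∃ x : ι, ∀ i, (G.edg e).2 i ∈ bag x
  vert_connected : ∀ v : Fin G.n, (T.induce {x : ι | v ∈ bag x}).Connected
  root_bag : ∀ s : {s : ℕ // s ∈ G.srt}, G.src s ∈ bag root

/-- `G` has tree-width at most `k`: it has a tree decomposition all of whose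
bags have at most `k+1` elements. -/
def TWle (G : CG Lab ar) (k : ℕ) : Prop :=
  ∃ td : TreeDecomp G, ∀ x, (td.bag x).card ≤ k + 1

/-! ### Trees -/

/-- Terms denoting trees over an alphabet `B1` of unary and `B2` of binary
edge labels: constants for unary labels, the `append` operations for binary
labels, and root-fusing composition. -/
inductive TTerm (B1 B2 : Type) : Type
  | leaf (c : B1)
  | append (b : B2) (t : TTerm B1 B2)
  | comp (t₁ t₂ : TTerm B1 B2)

/-- Arity function for tree edge labels. -/
def tAr {B1 B2 : Type} : B1 ⊕ B2 → ℕ := Sum.elim (fun _ => 1) (fun _ => 2)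

/-- The tree (as a graph with root source `0`) denoted by a tree term. -/
def treeEval {B1 B2 : Type} : TTerm B1 B2 → CG (B1 ⊕ B2) tAr
  | .leaf c => cedge (Sum.inl c) (fun _ => 0)
  | .append b t => crename (Equiv.swap 0 1)
      (crestrict {1} (ccomp (cedge (Sum.inr b) ![1, 0]) (treeEval t)))
  | .comp t₁ t₂ => ccomp (treeEval t₁) (treeEval t₂)

/-- Two tree terms denote the same tree. -/
def SameTree {B1 B2 : Type} (t u : TTerm B1 B2) : Prop :=
  GIso (treeEval t) (treeEval u)

/-- The height of (the tree denoted by) a tree term. -/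
def TTerm.height {B1 B2 : Type} : TTerm B1 B2 → ℕ
  | .leaf _ => 0
  | .append _ t => t.height + 1
  | .comp t₁ t₂ => max t₁.height t₂.height

/-- Iterated composition `x ∥ l₁ ∥ … ∥ l_n`. -/
def compList {B1 B2 : Type} (x : TTerm B1 B2) (l : List (TTerm B1 B2)) : TTerm B1 B2 :=
  l.foldl TTerm.comp x

/-- Equality of tree terms up to commutativity and associativity of `∥`. -/
inductive ACeq {B1 B2 : Type} : TTerm B1 B2 → TTerm B1 B2 → Prop
  | refl (t) : ACeq t t
  | symm {t u} : ACeq t u → ACeq u t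
  | trans {t u v} : ACeq t u → ACeq u v → ACeq t v
  | comm (t u) : ACeq (.comp t u) (.comp u t)
  | assoc (t u v) : ACeq (.comp (.comp t u) v) (.comp t (.comp u v))
  | congr_append (b) {t u} : ACeq t u → ACeq (.append b t) (.append b u)
  | congr_comp {t u t' u'} : ACeq t t' → ACeq u u' → ACeq (.comp t u) (.comp t' u')

/-! ### Parse trees -/

/-- Unary parse-tree edge labels: the HR constants. -/
inductive PUn (Lab : Type) (ar : Lab → ℕ) : Type
  | zero (τ : Finset ℕ)
  | edge (a : Lab) (s : Fin (ar a) → ℕ)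

/-- Binary parse-tree edge labels: restriction and renaming. -/
inductive PBin : Type
  | restrict (τ : Finset ℕ)
  | rename (α : Equiv.Perm ℕ) (hα : IsFinPerm α)

/-- Parse trees (as tree terms over the parse alphabet). -/
abbrev PTerm (Lab : Type) (ar : Lab → ℕ) : Type := TTerm (PUn Lab ar) PBin

/-- The canonical evaluation of a parse tree: interpret the edge labels as HR
operations in the graph algebra. -/
def pval : PTerm Lab ar → CG Lab ar
  | .leaf (.zero τ) => czero τ
  | .leaf (.edge a s) => cedge a s
  | .append (.restrict τ) t => crestrict τ (pval t)
  | .append (.rename α _) t => crename α (pval t)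
  | .comp t₁ t₂ => ccomp (pval t₁) (pval t₂)

/-- The unary parse label uses only sources from `τ`. -/
def PUnOK (τ : Finset ℕ) : PUn Lab ar → Prop
  | .zero τ' => τ' ⊆ τ
  | .edge _ s => ∀ i, s i ∈ τ

/-- The binary parse label uses only sources from `τ`. -/
def PBinOK (τ : Finset ℕ) : PBin → Prop
  | .restrict τ' => τ' ⊆ τ
  | .rename α _ => IsTauPerm τ α

/-- The `τ`-restricted parse alphabet (unary part). -/
abbrev PUnT (Lab : Type) (ar : Lab → ℕ) (τ : Finset ℕ) : Type := {u : PUn Lab ar // PUnOK τ u}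
/-- The `τ`-restricted parse alphabet (binary part). -/
abbrev PBinT (τ : Finset ℕ) : Type := {b : PBin // PBinOK τ b}
/-- Parse trees over the `τ`-restricted parse alphabet. -/
abbrev PTermT (Lab : Type) (ar : Lab → ℕ) (τ : Finset ℕ) : Type :=
  TTerm (PUnT Lab ar τ) (PBinT τ)

/-- Relabeling of tree terms. -/
def TTerm.mapL {B1 B2 B1' B2' : Type} (f : B1 → B1') (g : B2 → B2') :
    TTerm B1 B2 → TTerm B1' B2'
  | .leaf c => .leaf (f c)
  | .append b t => .append (g b) (t.mapL f g)
  | .comp t₁ t₂ => .comp (t₁.mapL f g) (t₂.mapL f g)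

/-- Inclusion of `τ`-restricted parse trees into all parse trees. -/
def ptInj {τ : Finset ℕ} (t : PTermT Lab ar τ) : PTerm Lab ar :=
  t.mapL Subtype.val Subtype.val

/-! ### Recognizability for sets of (parse) trees -/

/-- A congruence of the tree algebra `T(B_parse)` (over the universe of parse
trees): contains `SameTree` and is compatible with all tree operations. -/
structure TCong (B1 B2 : Type) : Type 1 where
  rel : TTerm B1 B2 → TTerm B1 B2 → Prop
  iseqv : Equivalence rel
  same_le : ∀ t u, SameTree t u → rel t u
  append_compat : ∀ (b : B2) t u, rel t u → rel (.append b t) (.append b u)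
  comp_compat : ∀ t₁ t₂ u₁ u₂, rel t₁ u₁ → rel t₂ u₂ →
    rel (.comp t₁ t₂) (.comp u₁ u₂)

/-- `K` is recognizable in the tree algebra. -/
def RecogTree {B1 B2 : Type} (K : Set (TTerm B1 B2)) : Prop :=
  ∃ C : TCong B1 B2, (∀ t u, C.rel t u → (t ∈ K ↔ u ∈ K)) ∧ Finite (Quot C.rel)

/-- A congruence of the algebra of parse trees `P` (the HR signature
interpreted over trees): contains `SameTree` and is compatible with the
HR operations on trees. -/
structure PCong (Lab : Type) (ar : Lab → ℕ) : Type 1 where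
  rel : PTerm Lab ar → PTerm Lab ar → Prop
  iseqv : Equivalence rel
  same_le : ∀ t u, SameTree t u → rel t u
  restrict_compat : ∀ (τ : Finset ℕ) t u, rel t u →
    rel (.append (PBin.restrict τ) t) (.append (PBin.restrict τ) u)
  rename_compat : ∀ (α : Equiv.Perm ℕ) (hα : IsFinPerm α) t u, rel t u →
    rel (.append (PBin.rename α hα) t) (.append (PBin.rename α hα) u)
  comp_compat : ∀ t₁ t₂ u₁ u₂, rel t₁ u₁ → rel t₂ u₂ →
    rel (.comp t₁ t₂) (.comp u₁ u₂)

/-- `K` is recognizable in the algebra of parse trees. -/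
def RecogP (K : Set (PTerm Lab ar)) : Prop :=
  ∃ C : PCong Lab ar, (∀ t u, C.rel t u → (t ∈ K ↔ u ∈ K)) ∧ Finite (Quot C.rel)

/-!
Graphs in `L` have no sources, so only contexts with a sourceless value matter. A context is
pushed, operation by operation from the root towards the hole, into the normal form
`restrict ρ (rename β □ ∥ H)` (`normCtx`); several occurrences of the hole are replaced one at
a time, and a restriction below the hole is absorbed by renaming the hidden sources of the
argument to fresh labels. At the hole, a sourceless normal form is isomorphic, after renaming
back along `β⁻¹` and cutting `H` down to its sources in `τ`, to a context that uses only labels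
from `τ`, on which the congruence of `G^τ` decides membership.
-/

theorem gIso_iff {G₁ G₂ : CG Lab ar} :
    GIso G₁ G₂ ↔ G₁.srt = G₂.srt ∧
      ∃ (ev : Fin G₁.n ≃ Fin G₂.n) (ee : Fin G₁.m ≃ Fin G₂.m),
        (∀ e, G₂.edg (ee e) = ⟨(G₁.edg e).1, fun i => ev ((G₁.edg e).2 i)⟩) ∧
        ∀ (s : ℕ) (h₁ : s ∈ G₁.srt) (h₂ : s ∈ G₂.srt),
          ev (G₁.src ⟨s, h₁⟩) = G₂.src ⟨s, h₂⟩ := by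
  simp only [GIso, Sigma.ext_iff]

namespace GIso

theorem refl (G : CG Lab ar) : GIso G G :=
  ⟨rfl, Equiv.refl _, Equiv.refl _, fun _ => ⟨rfl, HEq.rfl⟩, fun _ _ _ => rfl⟩

theorem symm {G₁ G₂ : CG Lab ar} (h : GIso G₁ G₂) : GIso G₂ G₁ := by
  obtain ⟨hs, ev, ee, hedg, hsrc⟩ := gIso_iff.mp h
  refine gIso_iff.mpr ⟨hs.symm, ev.symm, ee.symm, fun e => ?_, fun s h₂ h₁ => ?_⟩
  · have h' := hedg (ee.symm e)
    rw [Equiv.apply_symm_apply] at h'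
    rw [h']
    simp
  · rw [← hsrc s h₁ h₂, Equiv.symm_apply_apply]

theorem trans {G₁ G₂ G₃ : CG Lab ar} (h : GIso G₁ G₂) (h' : GIso G₂ G₃) : GIso G₁ G₃ := by
  obtain ⟨hs, ev, ee, hedg, hsrc⟩ := gIso_iff.mp h
  obtain ⟨hs', ev', ee', hedg', hsrc'⟩ := gIso_iff.mp h'
  refine gIso_iff.mpr ⟨hs.trans hs', ev.trans ev', ee.trans ee', fun e => ?_, fun s h₁ h₃ => ?_⟩
  · rw [Equiv.trans_apply, hedg', hedg]; rfl
  · simp only [Equiv.trans_apply, hsrc s h₁ (hs ▸ h₁), hsrc' s (hs ▸ h₁) h₃]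

theorem crestrict {G₁ G₂ : CG Lab ar} (ρ : Finset ℕ) (h : GIso G₁ G₂) :
    GIso (crestrict ρ G₁) (crestrict ρ G₂) := by
  obtain ⟨hs, ev, ee, hedg, hsrc⟩ := h
  exact ⟨by rw [crestrict_srt, crestrict_srt, hs], ev, ee, hedg,
    fun s h₁ h₂ => hsrc s (Finset.mem_inter.mp h₁).1 (Finset.mem_inter.mp h₂).1⟩

theorem crename {G₁ G₂ : CG Lab ar} (α : Equiv.Perm ℕ) (h : GIso G₁ G₂) :
    GIso (crename α G₁) (crename α G₂) := by
  obtain ⟨hs, ev, ee, hedg, hsrc⟩ := h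
  exact ⟨by rw [crename_srt, crename_srt, hs], ev, ee, hedg, fun s _ _ => hsrc _ _ _⟩

end GIso

theorem IsoClosed.mem_iff {L : Set (CG Lab ar)} (hL : IsoClosed L) {G₁ G₂ : CG Lab ar}
    (h : GIso G₁ G₂) : G₁ ∈ L ↔ G₂ ∈ L :=
  ⟨hL G₁ G₂ h, hL G₂ G₁ h.symm⟩

theorem mem_image_perm_symm {π : Equiv.Perm ℕ} {ρ : Finset ℕ} {s : ℕ} :
    s ∈ ρ.image π.symm ↔ π s ∈ ρ := by
  simp [Equiv.symm_apply_eq]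

theorem gIso_crename_crename (β α : Equiv.Perm ℕ) (X : CG Lab ar) :
    GIso (crename β (crename α X)) (crename (β.trans α) X) :=
  ⟨by simp only [crename_srt, Finset.image_image]; rfl, Equiv.refl _, Equiv.refl _,
    fun _ => ⟨rfl, HEq.rfl⟩, fun _ _ _ => rfl⟩

theorem gIso_crename_refl (X : CG Lab ar) : GIso (crename (Equiv.refl ℕ) X) X :=
  ⟨by simp [crename_srt], Equiv.refl _, Equiv.refl _, fun _ => ⟨rfl, HEq.rfl⟩, fun _ _ _ => rfl⟩

theorem gIso_crename_of_srt_eq_empty (π : Equiv.Perm ℕ) {X : CG Lab ar} (h : X.srt = ∅) :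
    GIso (crename π X) X :=
  ⟨by rw [crename_srt, h]; rfl, Equiv.refl _, Equiv.refl _, fun _ => ⟨rfl, HEq.rfl⟩,
    fun s _ h₂ => absurd (h ▸ h₂) (Finset.notMem_empty s)⟩

theorem gIso_crename_crestrict (π : Equiv.Perm ℕ) (ρ : Finset ℕ) (X : CG Lab ar) :
    GIso (crename π (crestrict ρ X)) (crestrict (ρ.image π.symm) (crename π X)) :=
  ⟨Finset.image_inter _ _ π.symm.injective, Equiv.refl _, Equiv.refl _,
    fun _ => ⟨rfl, HEq.rfl⟩, fun _ _ _ => rfl⟩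

theorem gIso_crestrict_crestrict (ρ ρ' : Finset ℕ) (X : CG Lab ar) :
    GIso (crestrict ρ (crestrict ρ' X)) (crestrict (ρ' ∩ ρ) X) :=
  ⟨Finset.inter_assoc _ _ _, Equiv.refl _, Equiv.refl _, fun _ => ⟨rfl, HEq.rfl⟩,
    fun _ _ _ => rfl⟩

theorem gIso_crestrict_of_srt_subset {ρ : Finset ℕ} {X : CG Lab ar} (h : X.srt ⊆ ρ) :
    GIso (crestrict ρ X) X :=
  ⟨Finset.inter_eq_left.mpr h, Equiv.refl _, Equiv.refl _, fun _ => ⟨rfl, HEq.rfl⟩,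
    fun _ _ _ => rfl⟩

theorem HRCtx.srt_apply_eq_of_srt_eq {G₁ G₂ : CG Lab ar} (h : G₁.srt = G₂.srt)
    (c : HRCtx Lab ar) : (c.apply G₁).srt = (c.apply G₂).srt := by
  induction c with
  | hole => exact h
  | const | zero | edge => rfl
  | restrict τ' c ih => exact congrArg (· ∩ τ') ih
  | rename α hα c ih => exact congrArg (Finset.image _) ih
  | comp c₁ c₂ ih₁ ih₂ => exact congrArg₂ (· ∪ ·) ih₁ ih₂

/-! ### Parallel composition through the fused quotient -/

def fusedEdg (P Q : CG Lab ar) :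
    Fin P.m ⊕ Fin Q.m → (a : Lab) × (Fin (ar a) → Quot (fuseRel P Q))
  | .inl e => ⟨(P.edg e).1, fun i => Quot.mk _ (.inl ((P.edg e).2 i))⟩
  | .inr e => ⟨(Q.edg e).1, fun i => Quot.mk _ (.inr ((Q.edg e).2 i))⟩

def fusedSrc (P Q : CG Lab ar) (s : ℕ) (h : s ∈ (ccomp P Q).srt) : Quot (fuseRel P Q) :=
  if hp : s ∈ P.srt then Quot.mk _ (.inl (P.src ⟨s, hp⟩))
  else Quot.mk _ (.inr (Q.src ⟨s, (Finset.mem_union.mp h).resolve_left hp⟩))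

/-- The vertex numbering chosen by `ccomp`. -/
def fusedEquiv (P Q : CG Lab ar) : Quot (fuseRel P Q) ≃ Fin (ccomp P Q).n :=
  Finite.equivFin _

theorem ccomp_src_eq (P Q : CG Lab ar) (s : ℕ) (h : s ∈ (ccomp P Q).srt) :
    (ccomp P Q).src ⟨s, h⟩ = fusedEquiv P Q (fusedSrc P Q s h) := by
  unfold ccomp fusedEquiv fusedSrc
  by_cases hp : s ∈ P.srt <;> simp [hp]

theorem ccomp_edg_eq (P Q : CG Lab ar) (i : Fin (ccomp P Q).m) :
    (ccomp P Q).edg i = ⟨(fusedEdg P Q (finSumFinEquiv.symm i)).1,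
      fun j => fusedEquiv P Q ((fusedEdg P Q (finSumFinEquiv.symm i)).2 j)⟩ := by
  rcases h : finSumFinEquiv.symm i with e | e <;>
  · unfold ccomp fusedEquiv fusedEdg
    dsimp only
    rw [h]

theorem ccomp_edg_castAdd (P Q : CG Lab ar) (e : Fin P.m) :
    (ccomp P Q).edg (Fin.castAdd Q.m e)
      = ⟨(P.edg e).1, fun i => fusedEquiv P Q (Quot.mk _ (.inl ((P.edg e).2 i)))⟩ := by
  simp only [ccomp, fusedEquiv, finSumFinEquiv_symm_apply_castAdd]
  rfl

theorem ccomp_edg_natAdd (P Q : CG Lab ar) (e : Fin Q.m) :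
    (ccomp P Q).edg (Fin.natAdd P.m e)
      = ⟨(Q.edg e).1, fun i => fusedEquiv P Q (Quot.mk _ (.inr ((Q.edg e).2 i)))⟩ := by
  simp only [ccomp, fusedEquiv, finSumFinEquiv_symm_apply_natAdd]
  rfl

theorem mem_ccomp_srt_of_mem_left {P Q : CG Lab ar} {s : ℕ} (h : s ∈ P.srt) :
    s ∈ (ccomp P Q).srt :=
  Finset.mem_union_left _ h

theorem mem_ccomp_srt_of_mem_right {P Q : CG Lab ar} {s : ℕ} (h : s ∈ Q.srt) :
    s ∈ (ccomp P Q).srt :=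
  Finset.mem_union_right _ h

theorem fusedSrc_of_mem_left {P Q : CG Lab ar} {s : ℕ} (h : s ∈ (ccomp P Q).srt)
    (hP : s ∈ P.srt) : fusedSrc P Q s h = Quot.mk _ (.inl (P.src ⟨s, hP⟩)) :=
  dif_pos hP

theorem fusedSrc_of_mem_right {P Q : CG Lab ar} {s : ℕ} (h : s ∈ (ccomp P Q).srt)
    (hQ : s ∈ Q.srt) : fusedSrc P Q s h = Quot.mk _ (.inr (Q.src ⟨s, hQ⟩)) := by
  unfold fusedSrc
  split_ifs with hP
  exacts [Quot.sound ⟨s, hP, hQ, rfl, rfl⟩, rfl]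

section QuotEquiv

variable {P Q R S : CG Lab ar} (q : Quot (fuseRel P Q) ≃ Quot (fuseRel R S))

def ccompVertexEquiv : Fin (ccomp P Q).n ≃ Fin (ccomp R S).n :=
  (fusedEquiv P Q).symm.trans (q.trans (fusedEquiv R S))

def ccompEdgeEquiv (ee : (Fin P.m ⊕ Fin Q.m) ≃ (Fin R.m ⊕ Fin S.m)) :
    Fin (ccomp P Q).m ≃ Fin (ccomp R S).m :=
  finSumFinEquiv.symm.trans (ee.trans finSumFinEquiv)

theorem ccomp_edg_ccompEdgeEquiv (ee : (Fin P.m ⊕ Fin Q.m) ≃ (Fin R.m ⊕ Fin S.m))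
    (hedg : ∀ j, fusedEdg R S (ee j) = ⟨(fusedEdg P Q j).1, fun i => q ((fusedEdg P Q j).2 i)⟩)
    (e : Fin (ccomp P Q).m) :
    (ccomp R S).edg (ccompEdgeEquiv ee e)
      = ⟨((ccomp P Q).edg e).1, fun i => ccompVertexEquiv q (((ccomp P Q).edg e).2 i)⟩ := by
  have he : finSumFinEquiv.symm (ccompEdgeEquiv ee e) = ee (finSumFinEquiv.symm e) :=
    Equiv.symm_apply_apply _ _
  rw [ccomp_edg_eq, ccomp_edg_eq, he, hedg]
  simp [ccompVertexEquiv]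

theorem ccompVertexEquiv_src {s₁ s₂ : ℕ} (h₁ : s₁ ∈ (ccomp P Q).srt)
    (h₂ : s₂ ∈ (ccomp R S).srt) (hsrc : q (fusedSrc P Q s₁ h₁) = fusedSrc R S s₂ h₂) :
    ccompVertexEquiv q ((ccomp P Q).src ⟨s₁, h₁⟩) = (ccomp R S).src ⟨s₂, h₂⟩ := by
  rw [ccomp_src_eq, ccomp_src_eq, ccompVertexEquiv, Equiv.trans_apply, Equiv.symm_apply_apply,
    Equiv.trans_apply, hsrc]

theorem gIso_crestrict_ccomp_of_quotEquiv (ρ₁ ρ₂ : Finset ℕ)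
    (ee : (Fin P.m ⊕ Fin Q.m) ≃ (Fin R.m ⊕ Fin S.m))
    (hsrt : (P.srt ∪ Q.srt) ∩ ρ₁ = (R.srt ∪ S.srt) ∩ ρ₂)
    (hedg : ∀ j, fusedEdg R S (ee j) = ⟨(fusedEdg P Q j).1, fun i => q ((fusedEdg P Q j).2 i)⟩)
    (hsrc : ∀ s (h₁ : s ∈ (ccomp P Q).srt) (h₂ : s ∈ (ccomp R S).srt), s ∈ ρ₁ →
      q (fusedSrc P Q s h₁) = fusedSrc R S s h₂) :
    GIso (crestrict ρ₁ (ccomp P Q)) (crestrict ρ₂ (ccomp R S)) :=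
  gIso_iff.mpr ⟨hsrt, ccompVertexEquiv q, ccompEdgeEquiv ee, ccomp_edg_ccompEdgeEquiv q ee hedg,
    fun s h₁ h₂ => ccompVertexEquiv_src q (Finset.mem_inter.mp h₁).1 (Finset.mem_inter.mp h₂).1
      (hsrc s _ _ (Finset.mem_inter.mp h₁).2)⟩

theorem gIso_ccomp_of_quotEquiv (ee : (Fin P.m ⊕ Fin Q.m) ≃ (Fin R.m ⊕ Fin S.m))
    (hsrt : P.srt ∪ Q.srt = R.srt ∪ S.srt)
    (hedg : ∀ j, fusedEdg R S (ee j) = ⟨(fusedEdg P Q j).1, fun i => q ((fusedEdg P Q j).2 i)⟩)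
    (hsrc : ∀ s (h₁ : s ∈ (ccomp P Q).srt) (h₂ : s ∈ (ccomp R S).srt),
      q (fusedSrc P Q s h₁) = fusedSrc R S s h₂) :
    GIso (ccomp P Q) (ccomp R S) :=
  (gIso_crestrict_of_srt_subset subset_rfl).symm.trans
    ((gIso_crestrict_ccomp_of_quotEquiv q (P.srt ∪ Q.srt) (R.srt ∪ S.srt) ee
      (by rw [Finset.inter_self, Finset.inter_self, hsrt]) hedg
      fun s h₁ h₂ _ => hsrc s h₁ h₂).trans (gIso_crestrict_of_srt_subset subset_rfl))

end QuotEquiv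

theorem GIso.ccomp {P P' Q Q' : CG Lab ar} (hP : GIso P P') (hQ : GIso Q Q') :
    GIso (ccomp P Q) (ccomp P' Q') := by
  obtain ⟨hsP, evP, eeP, hedgP, hsrcP⟩ := gIso_iff.mp hP
  obtain ⟨hsQ, evQ, eeQ, hedgQ, hsrcQ⟩ := gIso_iff.mp hQ
  have hfuse : ∀ x y, fuseRel P Q x y ↔
      fuseRel P' Q' (Equiv.sumCongr evP evQ x) (Equiv.sumCongr evP evQ y) := by
    intro x y
    constructor
    · rintro ⟨s, h₁, h₂, rfl, rfl⟩
      exact ⟨s, hsP ▸ h₁, hsQ ▸ h₂, by simp [hsrcP s h₁ (hsP ▸ h₁)],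
        by simp [hsrcQ s h₂ (hsQ ▸ h₂)]⟩
    · rintro ⟨s, h₁, h₂, hx, hy⟩
      refine ⟨s, hsP ▸ h₁, hsQ ▸ h₂, (Equiv.sumCongr evP evQ).injective ?_,
        (Equiv.sumCongr evP evQ).injective ?_⟩
      · rw [hx]; simp [hsrcP s (hsP ▸ h₁) h₁]
      · rw [hy]; simp [hsrcQ s (hsQ ▸ h₂) h₂]
  refine gIso_ccomp_of_quotEquiv (Quot.congr _ hfuse) (Equiv.sumCongr eeP eeQ)
    (by rw [hsP, hsQ]) ?_ fun s h₁ h₂ => ?_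
  · rintro (e | e)
    · show fusedEdg P' Q' (.inl (eeP e)) = _
      simp only [fusedEdg]
      rw [hedgP e]
      rfl
    · show fusedEdg P' Q' (.inr (eeQ e)) = _
      simp only [fusedEdg]
      rw [hedgQ e]
      rfl
  · by_cases hp : s ∈ P.srt
    · rw [fusedSrc_of_mem_left h₁ hp, fusedSrc_of_mem_left h₂ (hsP ▸ hp),
        ← hsrcP s hp (hsP ▸ hp)]
      rfl
    · have hq : s ∈ Q.srt := (Finset.mem_union.mp h₁).resolve_left hp
      rw [fusedSrc_of_mem_right h₁ hq, fusedSrc_of_mem_right h₂ (hsQ ▸ hq),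
        ← hsrcQ s hq (hsQ ▸ hq)]
      rfl

theorem gIso_crename_ccomp (π : Equiv.Perm ℕ) (A B : CG Lab ar) :
    GIso (crename π (ccomp A B)) (ccomp (crename π A) (crename π B)) := by
  have hfuse : ∀ x y, fuseRel A B x y ↔
      fuseRel (crename π A) (crename π B) (Equiv.refl _ x) (Equiv.refl _ y) := by
    intro x y
    constructor
    · rintro ⟨s, h₁, h₂, rfl, rfl⟩
      refine ⟨π.symm s, mem_image_perm_symm.mpr (by simpa using h₁),
        mem_image_perm_symm.mpr (by simpa using h₂), ?_, ?_⟩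
      · show Sum.inl (A.src _) = Sum.inl (A.src ⟨π (π.symm s), _⟩)
        exact congrArg (Sum.inl ∘ A.src) (Subtype.ext (π.apply_symm_apply s).symm)
      · show Sum.inr (B.src _) = Sum.inr (B.src ⟨π (π.symm s), _⟩)
        exact congrArg (Sum.inr ∘ B.src) (Subtype.ext (π.apply_symm_apply s).symm)
    · rintro ⟨s, h₁, h₂, hx, hy⟩
      exact ⟨π s, mem_image_perm_symm.mp h₁, mem_image_perm_symm.mp h₂, hx, hy⟩
  let q := Quot.congr (Equiv.refl _) hfuse
  refine gIso_iff.mpr ⟨Finset.image_union _ _, ccompVertexEquiv q,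
    ccompEdgeEquiv (Equiv.refl _), ccomp_edg_ccompEdgeEquiv q _ (by rintro (e | e) <;> rfl),
    fun s h₁ h₂ => ?_⟩
  have hπ : π s ∈ (ccomp A B).srt := mem_image_perm_symm.mp h₁
  refine ccompVertexEquiv_src q hπ h₂ ?_
  by_cases hA : π s ∈ A.srt
  · rw [fusedSrc_of_mem_left hπ hA, fusedSrc_of_mem_left h₂ (mem_image_perm_symm.mpr hA)]
    rfl
  · have hB : π s ∈ B.srt := (Finset.mem_union.mp hπ).resolve_left hA
    rw [fusedSrc_of_mem_right hπ hB, fusedSrc_of_mem_right h₂ (mem_image_perm_symm.mpr hB)]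
    rfl

theorem gIso_ccomp_czero_empty (X : CG Lab ar) : GIso (ccomp X (czero ∅)) X := by
  have hzero : (czero ∅ : CG Lab ar).n = 0 := Finset.card_empty (α := ℕ)
  have hfuse : ∀ x y, ¬ fuseRel X (czero ∅) x y := fun _ _ ⟨s, _, h₂, _⟩ =>
    Finset.notMem_empty s h₂
  let q : Quot (fuseRel X (czero ∅)) ≃ Fin X.n :=
    { toFun := Quot.lift (Sum.elim id fun z => (Fin.cast hzero z).elim0)
        fun x y h => absurd h (hfuse x y)
      invFun v := Quot.mk _ (.inl v)
      left_inv p := by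
        induction p using Quot.ind with
        | _ x => rcases x with v | z
                 · rfl
                 · exact (Fin.cast hzero z).elim0
      right_inv _ := rfl }
  have hedg : ∀ e : Fin (ccomp X (czero ∅)).m,
      (finSumFinEquiv.symm e : Fin X.m ⊕ Fin (czero ∅ : CG Lab ar).m) = .inl e :=
    fun _ => (Equiv.symm_apply_eq _).mpr rfl
  refine gIso_iff.mpr ⟨Finset.union_empty _, (fusedEquiv X (czero ∅)).symm.trans q,
    Equiv.refl (Fin X.m), fun e => ?_, fun s h₁ h₂ => ?_⟩
  · rw [ccomp_edg_eq, hedg e]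
    simp only [fusedEdg, Equiv.trans_apply, Equiv.symm_apply_apply]
    rfl
  · rw [ccomp_src_eq, Equiv.trans_apply, Equiv.symm_apply_apply, fusedSrc_of_mem_left h₁ h₂]
    rfl

def equivOfCommProj {T X Y : Type*} {ι₁ : T → X} {ι₂ : T → Y} (h₁ : Function.Surjective ι₁)
    (h₂ : Function.Surjective ι₂) (f : X → Y) (g : Y → X) (hf : ∀ t, f (ι₁ t) = ι₂ t)
    (hg : ∀ t, g (ι₂ t) = ι₁ t) : X ≃ Y where
  toFun := f
  invFun := g
  left_inv x := by obtain ⟨t, rfl⟩ := h₁ x; rw [hf, hg]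
  right_inv y := by obtain ⟨t, rfl⟩ := h₂ y; rw [hg, hf]

theorem gIso_ccomp_comm (A B : CG Lab ar) : GIso (ccomp A B) (ccomp B A) := by
  have hswap : ∀ (P Q : CG Lab ar) x y, fuseRel P Q x y →
      Quot.mk (fuseRel Q P) x.swap = Quot.mk (fuseRel Q P) y.swap := by
    rintro P Q _ _ ⟨s, h₁, h₂, rfl, rfl⟩
    exact (Quot.sound ⟨s, h₂, h₁, rfl, rfl⟩).symm
  let q := equivOfCommProj (ι₂ := Quot.mk (fuseRel B A) ∘ Sum.swap) Quot.mk_surjective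
    (Quot.mk_surjective.comp Sum.swap_rightInverse.surjective) (Quot.lift _ (hswap A B))
    (Quot.lift _ (hswap B A)) (fun _ => rfl) (fun x => congrArg (Quot.mk _) x.swap_swap)
  refine gIso_ccomp_of_quotEquiv q (Equiv.sumComm _ _) (Finset.union_comm _ _)
    (by rintro (e | e) <;> rfl) fun s h₁ h₂ => ?_
  by_cases hA : s ∈ A.srt
  · rw [fusedSrc_of_mem_left h₁ hA, fusedSrc_of_mem_right h₂ hA]
    rfl
  · have hB : s ∈ B.srt := (Finset.mem_union.mp h₁).resolve_left hA
    rw [fusedSrc_of_mem_right h₁ hB, fusedSrc_of_mem_left h₂ hB]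
    rfl

section Assoc

variable (A B C : CG Lab ar)

/- Both sides of associativity are quotients of the disjoint union of the vertices of `A`, `B`
and `C`. -/

def assocMkLeft : Fin A.n ⊕ Fin B.n ⊕ Fin C.n → Quot (fuseRel (ccomp A B) C)
  | .inl a => Quot.mk _ (.inl (fusedEquiv A B (Quot.mk _ (.inl a))))
  | .inr (.inl b) => Quot.mk _ (.inl (fusedEquiv A B (Quot.mk _ (.inr b))))
  | .inr (.inr c) => Quot.mk _ (.inr c)

def assocMkRight : Fin A.n ⊕ Fin B.n ⊕ Fin C.n → Quot (fuseRel A (ccomp B C))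
  | .inl a => Quot.mk _ (.inl a)
  | .inr (.inl b) => Quot.mk _ (.inr (fusedEquiv B C (Quot.mk _ (.inl b))))
  | .inr (.inr c) => Quot.mk _ (.inr (fusedEquiv B C (Quot.mk _ (.inr c))))

inductive IsSrcVertex (s : ℕ) : Fin A.n ⊕ Fin B.n ⊕ Fin C.n → Prop
  | left (h : s ∈ A.srt) : IsSrcVertex s (.inl (A.src ⟨s, h⟩))
  | mid (h : s ∈ B.srt) : IsSrcVertex s (.inr (.inl (B.src ⟨s, h⟩)))
  | right (h : s ∈ C.srt) : IsSrcVertex s (.inr (.inr (C.src ⟨s, h⟩)))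

variable {A B C}

theorem fusedSrc_eq_assocMkLeft {s : ℕ} (h : s ∈ (ccomp (ccomp A B) C).srt)
    {x : Fin A.n ⊕ Fin B.n ⊕ Fin C.n} (hx : IsSrcVertex A B C s x) :
    fusedSrc (ccomp A B) C s h = assocMkLeft A B C x := by
  cases hx with
  | left hA =>
    rw [fusedSrc_of_mem_left h (mem_ccomp_srt_of_mem_left hA), ccomp_src_eq,
      fusedSrc_of_mem_left _ hA]
    rfl
  | mid hB =>
    rw [fusedSrc_of_mem_left h (mem_ccomp_srt_of_mem_right hB), ccomp_src_eq,
      fusedSrc_of_mem_right _ hB]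
    rfl
  | right hC => rw [fusedSrc_of_mem_right h hC]; rfl

theorem fusedSrc_eq_assocMkRight {s : ℕ} (h : s ∈ (ccomp A (ccomp B C)).srt)
    {x : Fin A.n ⊕ Fin B.n ⊕ Fin C.n} (hx : IsSrcVertex A B C s x) :
    fusedSrc A (ccomp B C) s h = assocMkRight A B C x := by
  cases hx with
  | left hA => rw [fusedSrc_of_mem_left h hA]; rfl
  | mid hB =>
    rw [fusedSrc_of_mem_right h (mem_ccomp_srt_of_mem_left hB), ccomp_src_eq,
      fusedSrc_of_mem_left _ hB]
    rfl
  | right hC =>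
    rw [fusedSrc_of_mem_right h (mem_ccomp_srt_of_mem_right hC), ccomp_src_eq,
      fusedSrc_of_mem_right _ hC]
    rfl

theorem IsSrcVertex.mem_srt {s : ℕ} {x : Fin A.n ⊕ Fin B.n ⊕ Fin C.n}
    (hx : IsSrcVertex A B C s x) : s ∈ A.srt ∪ (B.srt ∪ C.srt) := by
  cases hx <;> simp_all

theorem assocMkLeft_eq_of_isSrcVertex {s : ℕ} {x y : Fin A.n ⊕ Fin B.n ⊕ Fin C.n}
    (hx : IsSrcVertex A B C s x) (hy : IsSrcVertex A B C s y) :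
    assocMkLeft A B C x = assocMkLeft A B C y := by
  have h : s ∈ (ccomp (ccomp A B) C).srt := by
    rw [ccomp_srt, ccomp_srt, Finset.union_assoc]; exact hx.mem_srt
  rw [← fusedSrc_eq_assocMkLeft h hx, ← fusedSrc_eq_assocMkLeft h hy]

theorem assocMkRight_eq_of_isSrcVertex {s : ℕ} {x y : Fin A.n ⊕ Fin B.n ⊕ Fin C.n}
    (hx : IsSrcVertex A B C s x) (hy : IsSrcVertex A B C s y) :
    assocMkRight A B C x = assocMkRight A B C y := by
  rw [← fusedSrc_eq_assocMkRight hx.mem_srt hx, ← fusedSrc_eq_assocMkRight hx.mem_srt hy]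

theorem assocMkLeft_surjective : Function.Surjective (assocMkLeft A B C) := by
  rintro ⟨v | c⟩
  · obtain ⟨p, rfl⟩ := (fusedEquiv A B).surjective v
    induction p using Quot.ind with
    | _ p => rcases p with a | b
             exacts [⟨.inl a, rfl⟩, ⟨.inr (.inl b), rfl⟩]
  · exact ⟨.inr (.inr c), rfl⟩

theorem assocMkRight_surjective : Function.Surjective (assocMkRight A B C) := by
  rintro ⟨a | v⟩
  · exact ⟨.inl a, rfl⟩
  · obtain ⟨p, rfl⟩ := (fusedEquiv B C).surjective v
    induction p using Quot.ind with
    | _ p => rcases p with b | c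
             exacts [⟨.inr (.inl b), rfl⟩, ⟨.inr (.inr c), rfl⟩]

theorem exists_isSrcVertex {s : ℕ} (h : s ∈ A.srt ∪ B.srt ∪ C.srt) :
    ∃ x, IsSrcVertex A B C s x := by
  simp only [Finset.mem_union] at h
  rcases h with (hA | hB) | hC
  exacts [⟨_, .left hA⟩, ⟨_, .mid hB⟩, ⟨_, .right hC⟩]

variable (A B C)

def assocFwd : Quot (fuseRel (ccomp A B) C) → Quot (fuseRel A (ccomp B C)) :=
  have hAB : ∀ p p', fuseRel A B p p' →
      assocMkRight A B C (Sum.map id .inl p) = assocMkRight A B C (Sum.map id .inl p') := by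
    rintro _ _ ⟨s, hA, hB, rfl, rfl⟩
    exact assocMkRight_eq_of_isSrcVertex (.left hA) (.mid hB)
  Quot.lift
    (Sum.elim (fun v => Quot.lift _ hAB ((fusedEquiv A B).symm v))
      (fun c => assocMkRight A B C (.inr (.inr c))))
    (by
      rintro _ _ ⟨s, hAB, hC, rfl, rfl⟩
      simp only [Sum.elim_inl, Sum.elim_inr, ccomp_src_eq, Equiv.symm_apply_apply]
      by_cases hA : s ∈ A.srt
      · rw [fusedSrc_of_mem_left _ hA]
        exact assocMkRight_eq_of_isSrcVertex (.left hA) (.right hC)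
      · rw [fusedSrc_of_mem_right _ ((Finset.mem_union.mp hAB).resolve_left hA)]
        exact assocMkRight_eq_of_isSrcVertex (.mid _) (.right hC))

def assocBwd : Quot (fuseRel A (ccomp B C)) → Quot (fuseRel (ccomp A B) C) :=
  have hBC : ∀ p p', fuseRel B C p p' →
      assocMkLeft A B C (.inr p) = assocMkLeft A B C (.inr p') := by
    rintro _ _ ⟨s, hB, hC, rfl, rfl⟩
    exact assocMkLeft_eq_of_isSrcVertex (.mid hB) (.right hC)
  Quot.lift
    (Sum.elim (fun a => assocMkLeft A B C (.inl a))
      (fun v => Quot.lift _ hBC ((fusedEquiv B C).symm v)))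
    (by
      rintro _ _ ⟨s, hA, hBC, rfl, rfl⟩
      simp only [Sum.elim_inl, Sum.elim_inr, ccomp_src_eq, Equiv.symm_apply_apply]
      by_cases hB : s ∈ B.srt
      · rw [fusedSrc_of_mem_left _ hB]
        exact assocMkLeft_eq_of_isSrcVertex (.left hA) (.mid hB)
      · rw [fusedSrc_of_mem_right _ ((Finset.mem_union.mp hBC).resolve_left hB)]
        exact assocMkLeft_eq_of_isSrcVertex (.left hA) (.right _))

theorem assocFwd_assocMkLeft (t : Fin A.n ⊕ Fin B.n ⊕ Fin C.n) :
    assocFwd A B C (assocMkLeft A B C t) = assocMkRight A B C t := by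
  rcases t with a | b | c <;> simp [assocFwd, assocMkLeft]

theorem assocBwd_assocMkRight (t : Fin A.n ⊕ Fin B.n ⊕ Fin C.n) :
    assocBwd A B C (assocMkRight A B C t) = assocMkLeft A B C t := by
  rcases t with a | b | c <;> simp [assocBwd, assocMkRight]

def assocEdg : Fin A.m ⊕ Fin B.m ⊕ Fin C.m → (a : Lab) × (Fin (ar a) → Fin A.n ⊕ Fin B.n ⊕ Fin C.n)
  | .inl e => ⟨(A.edg e).1, fun i => .inl ((A.edg e).2 i)⟩
  | .inr (.inl e) => ⟨(B.edg e).1, fun i => .inr (.inl ((B.edg e).2 i))⟩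
  | .inr (.inr e) => ⟨(C.edg e).1, fun i => .inr (.inr ((C.edg e).2 i))⟩

def assocEdgeEquivLeft : Fin A.m ⊕ Fin B.m ⊕ Fin C.m ≃ Fin (ccomp A B).m ⊕ Fin C.m :=
  (Equiv.sumAssoc _ _ _).symm.trans (Equiv.sumCongr finSumFinEquiv (Equiv.refl _))

def assocEdgeEquivRight : Fin A.m ⊕ Fin B.m ⊕ Fin C.m ≃ Fin A.m ⊕ Fin (ccomp B C).m :=
  Equiv.sumCongr (Equiv.refl _) finSumFinEquiv

theorem fusedEdg_assocEdgeEquivLeft (k : Fin A.m ⊕ Fin B.m ⊕ Fin C.m) :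
    fusedEdg (ccomp A B) C (assocEdgeEquivLeft A B C k)
      = ⟨(assocEdg A B C k).1, fun i => assocMkLeft A B C ((assocEdg A B C k).2 i)⟩ := by
  rcases k with e | e | e
  · show fusedEdg (ccomp A B) C (.inl (finSumFinEquiv (.inl e))) = _
    simp only [fusedEdg, finSumFinEquiv_apply_left]
    rw [ccomp_edg_castAdd]
    rfl
  · show fusedEdg (ccomp A B) C (.inl (finSumFinEquiv (.inr e))) = _
    simp only [fusedEdg, finSumFinEquiv_apply_right]
    rw [ccomp_edg_natAdd]
    rfl
  · rfl

theorem fusedEdg_assocEdgeEquivRight (k : Fin A.m ⊕ Fin B.m ⊕ Fin C.m) :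
    fusedEdg A (ccomp B C) (assocEdgeEquivRight A B C k)
      = ⟨(assocEdg A B C k).1, fun i => assocMkRight A B C ((assocEdg A B C k).2 i)⟩ := by
  rcases k with e | e | e
  · rfl
  · show fusedEdg A (ccomp B C) (.inr (finSumFinEquiv (.inl e))) = _
    simp only [fusedEdg, finSumFinEquiv_apply_left]
    rw [ccomp_edg_castAdd]
    rfl
  · show fusedEdg A (ccomp B C) (.inr (finSumFinEquiv (.inr e))) = _
    simp only [fusedEdg, finSumFinEquiv_apply_right]
    rw [ccomp_edg_natAdd]
    rfl

theorem gIso_ccomp_assoc : GIso (ccomp (ccomp A B) C) (ccomp A (ccomp B C)) := by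
  let q := equivOfCommProj assocMkLeft_surjective assocMkRight_surjective (assocFwd A B C)
    (assocBwd A B C) (assocFwd_assocMkLeft A B C) (assocBwd_assocMkRight A B C)
  refine gIso_ccomp_of_quotEquiv q ((assocEdgeEquivLeft A B C).symm.trans
    (assocEdgeEquivRight A B C)) (Finset.union_assoc _ _ _) (fun j => ?_) (fun s h₁ h₂ => ?_)
  · obtain ⟨k, rfl⟩ := (assocEdgeEquivLeft A B C).surjective j
    rw [Equiv.trans_apply, Equiv.symm_apply_apply, fusedEdg_assocEdgeEquivLeft,
      fusedEdg_assocEdgeEquivRight]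
    exact congrArg (Sigma.mk _) (funext fun i => (assocFwd_assocMkLeft A B C _).symm)
  · obtain ⟨x, hx⟩ := exists_isSrcVertex h₁
    rw [fusedSrc_eq_assocMkLeft h₁ hx, fusedSrc_eq_assocMkRight h₂ hx]
    exact assocFwd_assocMkLeft A B C x

end Assoc

theorem exists_perm_fix_avoid (A B : Finset ℕ) :
    ∃ γ : Equiv.Perm ℕ, (∀ x ∈ A, x ∉ B → γ x = x) ∧ ∀ x ∈ B, γ x ∉ A := by
  obtain ⟨c, hc⟩ := (A ∪ B).exists_nat_subset_range
  have hlt : ∀ x ∈ A ∪ B, x < c := fun x hx => Finset.mem_range.mp (hc hx)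
  -- swap each `b ∈ B` with `b + c`
  let f : ℕ → ℕ := fun x => if x ∈ B then x + c else if c ≤ x ∧ x - c ∈ B then x - c else x
  have hf : Function.Involutive f := by
    intro x
    by_cases hx : x ∈ B
    · have : x + c ∉ B := fun h => by have := hlt _ (Finset.mem_union_right _ h); omega
      simp [f, hx, this]
    · by_cases h : c ≤ x ∧ x - c ∈ B
      · simp [f, hx, h, Nat.sub_add_cancel h.1]
      · simp [f, hx, h]
  refine ⟨hf.toPerm f, fun x hxA hxB => ?_, fun x hxB hxA => ?_⟩
  · have := hlt x (Finset.mem_union_left _ hxA)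
    show f x = x
    simp only [f, if_neg hxB]
    exact if_neg fun h => absurd h.1 (by omega)
  · have := hlt _ (Finset.mem_union_left _ hxA)
    change (if x ∈ B then x + c else _) < c at this
    rw [if_pos hxB] at this
    omega

/-- When no source survives `ρ`, the sources of `H` outside the sort of `G` play no role. -/
theorem gIso_crestrict_ccomp_of_srt_eq_empty {G H : CG Lab ar} (τ ρ : Finset ℕ)
    (hG : G.srt ⊆ τ) (hE : (G.srt ∪ H.srt) ∩ ρ = ∅) :
    GIso (crestrict ρ (ccomp G H)) (crestrict (ρ ∩ τ) (ccomp G (crestrict τ H))) := by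
  have hfuse : ∀ x y, fuseRel G H x y ↔ fuseRel G (crestrict τ H) (Equiv.refl _ x) (Equiv.refl _ y) :=
    fun x y => ⟨fun ⟨s, h₁, h₂, hx, hy⟩ => ⟨s, h₁, Finset.mem_inter.mpr ⟨h₂, hG h₁⟩, hx, hy⟩,
      fun ⟨s, h₁, h₂, hx, hy⟩ => ⟨s, h₁, (Finset.mem_inter.mp h₂).1, hx, hy⟩⟩
  refine gIso_crestrict_ccomp_of_quotEquiv (Quot.congr _ hfuse) _ _ (Equiv.refl _) ?_
    (by rintro (e | e) <;> rfl) fun s h₁ _ hρ => ?_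
  · rw [hE, eq_comm, ← Finset.subset_empty, ← hE]
    exact Finset.inter_subset_inter (Finset.union_subset_union_right Finset.inter_subset_left)
      Finset.inter_subset_left
  · exact absurd (hE ▸ Finset.mem_inter.mpr ⟨h₁, hρ⟩) (Finset.notMem_empty s)

section Fresh

variable {Y H : CG Lab ar} {s₀ : Finset ℕ} {γ : Equiv.Perm ℕ}

theorem srt_crename_inter_eq (hfix : ∀ y ∈ Y.srt ∩ s₀, γ.symm y = y)
    (hmove : ∀ y ∈ Y.srt, y ∉ s₀ → γ.symm y ∉ s₀ ∪ H.srt) :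
    (crename γ Y).srt ∩ (s₀ ∪ H.srt) = Y.srt ∩ s₀ := by
  ext t
  simp only [Finset.mem_inter, crename_srt, Finset.mem_image]
  constructor
  · rintro ⟨⟨u, hu, rfl⟩, ht⟩
    by_cases hus : u ∈ s₀
    · rw [hfix u (Finset.mem_inter.mpr ⟨hu, hus⟩)]
      exact ⟨hu, hus⟩
    · exact absurd ht (hmove u hu hus)
  · rintro ⟨hY, hs⟩
    exact ⟨⟨t, hY, hfix t (Finset.mem_inter.mpr ⟨hY, hs⟩)⟩, Finset.mem_union_left _ hs⟩

/-- Renaming the hidden sources of `Y` to fresh labels lets the restriction to `s₀` be pulled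
out of a composition. -/
theorem gIso_ccomp_crestrict_fresh (hfix : ∀ y ∈ Y.srt ∩ s₀, γ.symm y = y)
    (hmove : ∀ y ∈ Y.srt, y ∉ s₀ → γ.symm y ∉ s₀ ∪ H.srt) :
    GIso (ccomp (crestrict s₀ Y) H) (crestrict (s₀ ∪ H.srt) (ccomp (crename γ Y) H)) := by
  have hsrt := srt_crename_inter_eq hfix hmove
  have hmem : ∀ t ∈ s₀ ∪ H.srt, (t ∈ (crename γ Y).srt ↔ t ∈ Y.srt ∩ s₀) := fun t ht => by
    rw [← hsrt, Finset.mem_inter, and_iff_left ht]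
  have hsrc : ∀ t (h : t ∈ Y.srt ∩ s₀) (h' : t ∈ (crename γ Y).srt),
      (crename γ Y).src ⟨t, h'⟩ = (crestrict s₀ Y).src ⟨t, h⟩ := fun t h _ => by
    have hγ : γ t = t := by
      conv_lhs => rw [← hfix t h]
      exact γ.apply_symm_apply t
    exact congrArg Y.src (Subtype.ext hγ)
  have hfuse : ∀ x y, fuseRel (crestrict s₀ Y) H x y ↔
      fuseRel (crename γ Y) H (Equiv.refl _ x) (Equiv.refl _ y) := by
    intro x y
    constructor
    · rintro ⟨t, h₁, h₂, rfl, rfl⟩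
      have h₁' := (hmem t (Finset.mem_union_right _ h₂)).mpr h₁
      exact ⟨t, h₁', h₂, congrArg Sum.inl (hsrc t h₁ h₁').symm, rfl⟩
    · rintro ⟨t, h₁, h₂, rfl, rfl⟩
      have h₁' := (hmem t (Finset.mem_union_right _ h₂)).mp h₁
      exact ⟨t, h₁', h₂, congrArg Sum.inl (hsrc t h₁' h₁), rfl⟩
  refine (gIso_crestrict_of_srt_subset subset_rfl).symm.trans
    (gIso_crestrict_ccomp_of_quotEquiv (Quot.congr _ hfuse) _ _ (Equiv.refl _) ?_
      (by rintro (e | e) <;> rfl) fun t h₁ h₂ _ => ?_)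
  · rw [ccomp_srt, Finset.inter_self, Finset.union_inter_distrib_right, hsrt,
      Finset.inter_eq_left.mpr Finset.subset_union_right]
    rfl
  · by_cases hp : t ∈ Y.srt ∩ s₀
    · have hp' := (hmem t (Finset.mem_union_left _ (Finset.mem_inter.mp hp).2)).mpr hp
      rw [fusedSrc_of_mem_left h₁ hp, fusedSrc_of_mem_left h₂ hp', hsrc t hp hp']
      rfl
    · have hH : t ∈ H.srt := (Finset.mem_union.mp h₁).resolve_left hp
      rw [fusedSrc_of_mem_right h₁ hH, fusedSrc_of_mem_right h₂ hH]
      rfl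

end Fresh

/-! ### Contexts with one occurrence of the hole -/

/-- The shape to which restrictions, renamings and compositions around a single occurrence of
the hole can all be brought, up to isomorphism. -/
def normCtx (ρ : Finset ℕ) (β : Equiv.Perm ℕ) (H X : CG Lab ar) : CG Lab ar :=
  crestrict ρ (ccomp (crename β X) H)

section NormCtx

variable {ρ : Finset ℕ} {β : Equiv.Perm ℕ} {H : CG Lab ar}

theorem srt_normCtx (X : CG Lab ar) :
    (normCtx ρ β H X).srt = (X.srt.image β.symm ∪ H.srt) ∩ ρ := rfl

theorem gIso_normCtx_refl_czero {X : CG Lab ar} (h : X.srt ⊆ ρ) :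
    GIso (normCtx ρ (Equiv.refl ℕ) (czero ∅) X) X :=
  (GIso.crestrict ρ (((gIso_crename_refl X).ccomp (.refl _)).trans
    (gIso_ccomp_czero_empty X))).trans (gIso_crestrict_of_srt_subset h)

theorem gIso_normCtx_crename (α : Equiv.Perm ℕ) (Y : CG Lab ar) :
    GIso (normCtx ρ β H (crename α Y)) (normCtx ρ (β.trans α) H Y) :=
  GIso.crestrict ρ ((gIso_crename_crename β α Y).ccomp (.refl H))

theorem gIso_normCtx_ccomp_left (Y₁ Y₂ : CG Lab ar) :
    GIso (normCtx ρ β H (ccomp Y₁ Y₂)) (normCtx ρ β (ccomp (crename β Y₂) H) Y₁) :=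
  GIso.crestrict ρ (((gIso_crename_ccomp β Y₁ Y₂).ccomp (.refl H)).trans (gIso_ccomp_assoc _ _ _))

theorem gIso_normCtx_ccomp_right (Y₁ Y₂ : CG Lab ar) :
    GIso (normCtx ρ β H (ccomp Y₁ Y₂)) (normCtx ρ β (ccomp (crename β Y₁) H) Y₂) :=
  (GIso.crestrict ρ (((gIso_ccomp_comm Y₁ Y₂).crename β).ccomp (.refl H))).trans
    (gIso_normCtx_ccomp_left Y₂ Y₁)

/-- The hidden sources of the argument are renamed to labels fresh for `ρ` and `H`, uniformly
for all arguments of sort `σ`. -/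
theorem exists_gIso_normCtx_crestrict (σ τ' : Finset ℕ) :
    ∃ (ρ' : Finset ℕ) (β' : Equiv.Perm ℕ), ∀ Y : CG Lab ar, Y.srt = σ →
      GIso (normCtx ρ β H (crestrict τ' Y)) (normCtx ρ' β' H Y) := by
  set s₀ := τ'.image β.symm
  set σ' := σ.image β.symm
  obtain ⟨δ, hfix, hmove⟩ := exists_perm_fix_avoid (σ' ∪ s₀ ∪ H.srt) (σ' \ s₀)
  have hfix' : ∀ y ∈ σ' ∩ s₀, δ.symm.symm y = y := fun y hy => by
    rw [Finset.mem_inter] at hy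
    exact hfix y (by simp [hy.1]) (by simp [hy.2])
  have hmove' : ∀ y ∈ σ', y ∉ s₀ → δ.symm.symm y ∉ s₀ ∪ H.srt := fun y hy hys h =>
    hmove y (Finset.mem_sdiff.mpr ⟨hy, hys⟩)
      (Finset.union_subset_union Finset.subset_union_right subset_rfl h)
  refine ⟨(s₀ ∪ H.srt) ∩ ρ, δ.symm.trans β, fun Y hY => ?_⟩
  have hY' : (crename β Y).srt = σ' := by rw [crename_srt, hY]
  have hfresh := gIso_ccomp_crestrict_fresh (H := H) (by rw [hY']; exact hfix')
    (by rw [hY']; exact hmove')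
  exact (GIso.crestrict ρ (((gIso_crename_crestrict β τ' Y).ccomp (.refl H)).trans hfresh)).trans
    ((gIso_crestrict_crestrict _ _ _).trans
      (GIso.crestrict _ ((gIso_crename_crename _ _ Y).ccomp (.refl H))))

/-- Undoing the renaming and hiding the labels outside `τ` of the parameter turns a sourceless
`normCtx` into a context over `τ`. -/
theorem gIso_normCtx_of_srt_eq_empty {τ : Finset ℕ} {G : CG Lab ar} (hG : G.srt ⊆ τ)
    (hE : (normCtx ρ β H G).srt = ∅) :
    GIso (normCtx ρ β H G)
      (crestrict (ρ.image β ∩ τ) (ccomp G (crestrict τ (crename β.symm H)))) := by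
  have hren : GIso (crename β.symm (ccomp (crename β G) H)) (ccomp G (crename β.symm H)) :=
    (gIso_crename_ccomp _ _ _).trans <| GIso.ccomp
      ((gIso_crename_crename _ _ G).trans (by rw [Equiv.symm_trans_self]; exact gIso_crename_refl G))
      (.refl _)
  have h : GIso (normCtx ρ β H G) (crestrict (ρ.image β) (ccomp G (crename β.symm H))) := by
    refine (gIso_crename_of_srt_eq_empty β.symm hE).symm.trans ?_
    have := gIso_crename_crestrict β.symm ρ (ccomp (crename β G) H)
    rw [Equiv.symm_symm] at this
    exact this.trans (GIso.crestrict _ hren)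
  exact h.trans (gIso_crestrict_ccomp_of_srt_eq_empty τ _ hG (h.1.symm.trans hE))

end NormCtx

section SynCong

variable {τ : Finset ℕ} {L : Set (CG Lab ar)} {G₁ G₂ : CG Lab ar}

theorem SynCongHRT.normCtx_mem_iff (hL₀ : ∀ G ∈ L, G.srt = ∅) (hL : IsoClosed L)
    (h₁ : G₁.srt ⊆ τ) (h₂ : G₂.srt ⊆ τ) (h : SynCongHRT τ L G₁ G₂) (ρ : Finset ℕ)
    (β : Equiv.Perm ℕ) (H : CG Lab ar) :
    normCtx ρ β H G₁ ∈ L ↔ normCtx ρ β H G₂ ∈ L := by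
  have hsrt : (normCtx ρ β H G₂).srt = (normCtx ρ β H G₁).srt := by
    rw [srt_normCtx, srt_normCtx, h.1]
  by_cases hE : (normCtx ρ β H G₁).srt = ∅
  · let c : HRCtx Lab ar :=
      .restrict (ρ.image β ∩ τ) (.comp .hole (.const (crestrict τ (crename β.symm H))))
    have hc : c.usesOnly τ := ⟨Finset.inter_subset_right, trivial, Finset.inter_subset_right⟩
    rw [hL.mem_iff (gIso_normCtx_of_srt_eq_empty h₁ hE),
      hL.mem_iff (gIso_normCtx_of_srt_eq_empty h₂ (hsrt.trans hE))]
    exact h.2 c hc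
  · exact iff_of_false (fun hm => hE (hL₀ _ hm)) fun hm => hE (hsrt ▸ hL₀ _ hm)

theorem SynCongHRT.normCtx_apply_mem_iff (hL₀ : ∀ G ∈ L, G.srt = ∅) (hL : IsoClosed L)
    (h₁ : G₁.srt ⊆ τ) (h₂ : G₂.srt ⊆ τ) (h : SynCongHRT τ L G₁ G₂) (c : HRCtx Lab ar) :
    ∀ ρ β H, normCtx ρ β H (c.apply G₁) ∈ L ↔ normCtx ρ β H (c.apply G₂) ∈ L := by
  induction c with
  | hole => exact h.normCtx_mem_iff hL₀ hL h₁ h₂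
  | const | zero | edge => exact fun _ _ _ => Iff.rfl
  | restrict τ' c ih =>
    intro ρ β H
    obtain ⟨ρ', β', hY⟩ := exists_gIso_normCtx_crestrict (ρ := ρ) (β := β) (H := H)
      (c.apply G₁).srt τ'
    rw [HRCtx.apply, HRCtx.apply, hL.mem_iff (hY _ rfl),
      hL.mem_iff (hY _ (HRCtx.srt_apply_eq_of_srt_eq h.1 c).symm)]
    exact ih ρ' β' H
  | rename α _ c ih =>
    intro ρ β H
    rw [HRCtx.apply, HRCtx.apply, hL.mem_iff (gIso_normCtx_crename α _),
      hL.mem_iff (gIso_normCtx_crename α _)]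
    exact ih ρ (β.trans α) H
  | comp c₁ c₂ ih₁ ih₂ =>
    intro ρ β H
    calc normCtx ρ β H (ccomp (c₁.apply G₁) (c₂.apply G₁)) ∈ L
        ↔ normCtx ρ β (ccomp (crename β (c₂.apply G₁)) H) (c₁.apply G₁) ∈ L :=
          hL.mem_iff (gIso_normCtx_ccomp_left _ _)
      _ ↔ normCtx ρ β (ccomp (crename β (c₂.apply G₁)) H) (c₁.apply G₂) ∈ L := ih₁ _ _ _
      _ ↔ normCtx ρ β (ccomp (crename β (c₁.apply G₂)) H) (c₂.apply G₁) ∈ L :=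
          (hL.mem_iff (gIso_normCtx_ccomp_left _ _)).symm.trans
            (hL.mem_iff (gIso_normCtx_ccomp_right _ _))
      _ ↔ normCtx ρ β (ccomp (crename β (c₁.apply G₂)) H) (c₂.apply G₂) ∈ L := ih₂ _ _ _
      _ ↔ normCtx ρ β H (ccomp (c₁.apply G₂) (c₂.apply G₂)) ∈ L :=
          (hL.mem_iff (gIso_normCtx_ccomp_right _ _)).symm

end SynCong

/-- Let `L` be a set of graphs with no sources and `τ` a finite
sort.  For graphs `G₁`, `G₂` of sorts contained in `τ`, `G₁` and `G₂` are
syntactically congruent for `L` in the full HR graph algebra iff they are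
syntactically congruent for `L` in the finitely-sorted subalgebra `G^τ`. -/
theorem syntactic_congruences_agree {Lab : Type} {ar : Lab → ℕ}
    (τ : Finset ℕ) (L : Set (CG Lab ar)) (hsf : ∀ G ∈ L, G.srt = ∅)
    (hiso : IsoClosed L) (G₁ G₂ : CG Lab ar)
    (h₁ : G₁.srt ⊆ τ) (h₂ : G₂.srt ⊆ τ) :
    SynCongHR L G₁ G₂ ↔ SynCongHRT τ L G₁ G₂ := by
  refine ⟨fun h => ⟨h.1, fun c _ => h.2 c⟩, fun h => ⟨h.1, fun c => ?_⟩⟩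
  have hsrt := HRCtx.srt_apply_eq_of_srt_eq h.1 c
  rw [← hiso.mem_iff (gIso_normCtx_refl_czero (subset_refl (c.apply G₁).srt)),
    ← hiso.mem_iff (gIso_normCtx_refl_czero hsrt.ge)]
  exact h.normCtx_apply_mem_iff hsf hiso h₁ h₂ c _ _ _

end

end GraphCF
end

section
/- The composition of two definable transductions between relational structures is a definable transduction. -/
set_option autoImplicit false

namespace GraphCF

/-! ### Counting Monadic Second Order Logic and definable transductions -/

/-- A relational signature: relation symbols with arities. -/
structure RSig : Type 1 where
  Sym : Type
  arity : Sym → ℕ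

/-- A finite relational structure over the signature `R`. -/
structure Struc (R : RSig) : Type 1 where
  U : Type
  finU : Finite U
  rel : ∀ r : R.Sym, (Fin (R.arity r) → U) → Prop

/-- CMSO formulae over `R`; first-order and second-order variables are indexed
by natural numbers, `card X q p` is the cardinality constraint `|X| ≡ p (mod q)`. -/
inductive CMSO (R : RSig) : Type
  | eq (x y : ℕ)
  | rel (r : R.Sym) (xs : Fin (R.arity r) → ℕ)
  | mem (X x : ℕ)
  | card (X q p : ℕ)
  | not (φ : CMSO R)
  | and (φ ψ : CMSO R)
  | exFO (x : ℕ) (φ : CMSO R)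
  | exSO (X : ℕ) (φ : CMSO R)

/-- The satisfaction relation of CMSO, with first-order store `s1` and
second-order store `s2`. -/
def Sat {R : RSig} (S : Struc R) : (ℕ → S.U) → (ℕ → Set S.U) → CMSO R → Prop
  | s1, _, .eq x y => s1 x = s1 y
  | s1, _, .rel r xs => S.rel r fun i => s1 (xs i)
  | s1, s2, .mem X x => s1 x ∈ s2 X
  | _, s2, .card X q p => ∃ k : ℕ, Nat.card ↥(s2 X) = k * q + p
  | s1, s2, .not φ => ¬ Sat S s1 s2 φ
  | s1, s2, .and φ ψ => Sat S s1 s2 φ ∧ Sat S s1 s2 ψ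
  | s1, s2, .exFO x φ => ∃ u : S.U, Sat S (Function.update s1 x u) s2 φ
  | s1, s2, .exSO X φ => ∃ V : Set S.U, Sat S s1 (Function.update s2 X V) φ

/-- Satisfaction of a sentence. -/
def Models {R : RSig} (S : Struc R) (φ : CMSO R) : Prop :=
  ∀ (s1 : ℕ → S.U) (s2 : ℕ → Set S.U), Sat S s1 s2 φ

/-- Satisfaction of a formula whose free variables are among the set
parameters, valued by `P`. -/
def ModelsP {R : RSig} (S : Struc R) (P : ℕ → Set S.U) (φ : CMSO R) : Prop :=
  ∀ s1 : ℕ → S.U, Sat S s1 P φ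

/-- A definable set of structures: the models of some CMSO sentence. -/
def DefinableStruc {R : RSig} (𝒮 : Set (Struc R)) : Prop :=
  ∃ φ : CMSO R, 𝒮 = {S | Models S φ}

/-- Isomorphism of relational structures. -/
def SIso {R : RSig} (S₁ S₂ : Struc R) : Prop :=
  ∃ e : S₁.U ≃ S₂.U, ∀ (q : R.Sym) (f : Fin (R.arity q) → S₁.U),
    S₁.rel q f ↔ S₂.rel q (fun i => e (f i))

/-- A transduction scheme from `R`-structures to `R'`-structures: `k` copies,
a domain formula, universe formulas (first-order variable `0` denotes the
element) and relation formulas (first-order variables `0, …, arity−1` denote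
the arguments); the set parameters are the free second-order variables. -/
structure TScheme (R R' : RSig) : Type where
  k : ℕ
  dom : CMSO R
  univ : Fin k → CMSO R
  rel : ∀ q : R'.Sym, (Fin (R'.arity q) → Fin k) → CMSO R

/-- The output structure of a transduction scheme on input `S` with parameter
valuation `P`. -/
def TOut {R R' : RSig} (Θ : TScheme R R') (S : Struc R) (P : ℕ → Set S.U) : Struc R' where
  U := {ui : S.U × Fin Θ.k //
    ∀ s1 : ℕ → S.U, Sat S (Function.update s1 0 ui.1) P (Θ.univ ui.2)}
  finU := by
    have := S.finU
    exact Subtype.finite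
  rel q f := ∀ s1 : ℕ → S.U,
    (∀ j : Fin (R'.arity q), s1 j.1 = ((f j).1).1) →
    Sat S s1 P (Θ.rel q fun j => ((f j).1).2)

/-- The relation between input and output structures defined by a scheme. -/
def TRel {R R' : RSig} (Θ : TScheme R R') (S : Struc R) (S' : Struc R') : Prop :=
  ∃ P : ℕ → Set S.U, ModelsP S P Θ.dom ∧ SIso (TOut Θ S P) S'

/-- A definable transduction: a relation between structures that arises from
some transduction scheme. -/
def DefTrans {R R' : RSig} (δ : Struc R → Struc R' → Prop) : Prop :=
  ∃ Θ : TScheme R R', ∀ S S', δ S S' ↔ TRel Θ S S'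

/-! The composite scheme is obtained by backwards translation. An element `(m, j)` of the output of
`Θ₂` on the intermediate structure `TOut Θ₁ S P₁`, where `m = (u, i)`, becomes the element `u`
of `S` in copy `(i, j)`. A formula over the intermediate structure is translated into a formula
over `S` by relativizing quantifiers to surviving copies and substituting the formulas of `Θ₁` for
the atoms; a set variable becomes one set variable per copy, and a counting constraint
`|X| ≡ p (mod q)` on their disjoint union becomes a finite disjunction over the residues of the
parts. The parameters of both schemes are merged into a single valuation. -/

open Function

namespace CMSO

variable {R : RSig}

protected def tt : CMSO R := .eq 0 0

protected def ff : CMSO R := .not .tt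

protected def or (φ ψ : CMSO R) : CMSO R := .not (.and (.not φ) (.not ψ))

protected def imp (φ ψ : CMSO R) : CMSO R := .not (.and φ (.not ψ))

protected def iff (φ ψ : CMSO R) : CMSO R := .and (φ.imp ψ) (ψ.imp φ)

protected def all (x : ℕ) (φ : CMSO R) : CMSO R := .not (.exFO x (.not φ))

noncomputable def iOr {ι : Type*} [Finite ι] (f : ι → CMSO R) : CMSO R :=
  ((Fintype.ofFinite ι).elems.toList.map f).foldr CMSO.or CMSO.ff

noncomputable def iAnd {ι : Type*} [Finite ι] (f : ι → CMSO R) : CMSO R :=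
  .not (iOr fun i => .not (f i))

def bigAll (l : List ℕ) (φ : CMSO R) : CMSO R := l.foldr CMSO.all φ

def bigExSO (l : List ℕ) (φ : CMSO R) : CMSO R := l.foldr .exSO φ

def rename (fF fS : ℕ → ℕ) : CMSO R → CMSO R
  | .eq x y => .eq (fF x) (fF y)
  | .rel r xs => .rel r (fun j => fF (xs j))
  | .mem X x => .mem (fS X) (fF x)
  | .card X q p => .card (fS X) q p
  | .not φ => .not (rename fF fS φ)
  | .and φ ψ => .and (rename fF fS φ) (rename fF fS ψ)
  | .exFO x φ => .exFO (fF x) (rename fF fS φ)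
  | .exSO X φ => .exSO (fS X) (rename fF fS φ)

def freeFO : CMSO R → Finset ℕ
  | .eq x y => {x, y}
  | .rel _ xs => Finset.image xs Finset.univ
  | .mem _ x => {x}
  | .card _ _ _ => ∅
  | .not φ => freeFO φ
  | .and φ ψ => freeFO φ ∪ freeFO ψ
  | .exFO x φ => (freeFO φ).erase x
  | .exSO _ φ => freeFO φ

def freeBound (φ : CMSO R) : ℕ := (freeFO φ).sup id + 1

theorem lt_freeBound {φ : CMSO R} {x : ℕ} (h : x ∈ freeFO φ) : x < freeBound φ :=
  Nat.lt_succ_of_le (Finset.le_sup (f := id) h)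

theorem mem_freeFO_bigAll {l : List ℕ} {φ : CMSO R} {x : ℕ} (h : x ∈ freeFO (bigAll l φ)) :
    x ∈ freeFO φ ∧ x ∉ l := by
  induction l with
  | nil => exact ⟨h, List.not_mem_nil⟩
  | cons a l ih =>
    obtain ⟨hxa, hx⟩ := Finset.mem_erase.mp h
    exact ⟨(ih hx).1, List.not_mem_cons_of_ne_of_not_mem hxa (ih hx).2⟩

def closeFrom (A : ℕ) (φ : CMSO R) : CMSO R := bigAll (List.range' A (freeBound φ - A)) φ

theorem lt_of_mem_freeFO_closeFrom {A : ℕ} {φ : CMSO R} {x : ℕ}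
    (h : x ∈ freeFO (closeFrom A φ)) : x < A := by
  obtain ⟨hφ, hx⟩ := mem_freeFO_bigAll h
  have := lt_freeBound hφ
  rw [List.mem_range'_1] at hx
  omega

/-- Substitutes `args j` for the variable `j < A` of `θ` and `2 * X` for its set variables `X`;
to avoid capture, `θ` is renamed apart and the renamed variables are pinned by equations. -/
noncomputable def instantiate (A : ℕ) (args : Fin A → ℕ) (θ : CMSO R) : CMSO R :=
  let C := Finset.univ.sup args + 1
  bigAll (List.range' C (max (freeBound θ) A))
    ((iAnd fun j : Fin A => CMSO.eq (j + C) (args j)).imp (rename (· + C) (2 * ·) θ))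

end CMSO

open CMSO

section Semantics

variable {R : RSig} {S : Struc R} {s1 : ℕ → S.U} {s2 : ℕ → Set S.U}

@[simp] theorem sat_eq {x y : ℕ} : Sat S s1 s2 (.eq x y) ↔ s1 x = s1 y := Iff.rfl

@[simp] theorem sat_mem {X x : ℕ} : Sat S s1 s2 (.mem X x) ↔ s1 x ∈ s2 X := Iff.rfl

@[simp] theorem sat_not {φ : CMSO R} : Sat S s1 s2 (.not φ) ↔ ¬ Sat S s1 s2 φ := Iff.rfl

@[simp] theorem sat_and {φ ψ : CMSO R} :
    Sat S s1 s2 (.and φ ψ) ↔ Sat S s1 s2 φ ∧ Sat S s1 s2 ψ := Iff.rfl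

@[simp] theorem sat_exFO {x : ℕ} {φ : CMSO R} :
    Sat S s1 s2 (.exFO x φ) ↔ ∃ u, Sat S (update s1 x u) s2 φ := Iff.rfl

@[simp] theorem sat_exSO {X : ℕ} {φ : CMSO R} :
    Sat S s1 s2 (.exSO X φ) ↔ ∃ V, Sat S s1 (update s2 X V) φ := Iff.rfl

@[simp] theorem sat_card {X q p : ℕ} :
    Sat S s1 s2 (.card X q p) ↔ ∃ K, Nat.card (s2 X) = K * q + p := Iff.rfl

@[simp] theorem sat_ff : ¬ Sat S s1 s2 CMSO.ff := not_not_intro rfl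

@[simp] theorem sat_or {φ ψ : CMSO R} :
    Sat S s1 s2 (φ.or ψ) ↔ Sat S s1 s2 φ ∨ Sat S s1 s2 ψ := by
  simp [CMSO.or, or_iff_not_and_not]

@[simp] theorem sat_imp {φ ψ : CMSO R} :
    Sat S s1 s2 (φ.imp ψ) ↔ (Sat S s1 s2 φ → Sat S s1 s2 ψ) := by
  simp [CMSO.imp]

@[simp] theorem sat_iff {φ ψ : CMSO R} :
    Sat S s1 s2 (φ.iff ψ) ↔ (Sat S s1 s2 φ ↔ Sat S s1 s2 ψ) := by
  simp only [CMSO.iff, sat_and, sat_imp, iff_iff_implies_and_implies]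

@[simp] theorem sat_all {x : ℕ} {φ : CMSO R} :
    Sat S s1 s2 (CMSO.all x φ) ↔ ∀ u, Sat S (update s1 x u) s2 φ := by
  simp [CMSO.all]

@[simp] theorem sat_iOr {ι : Type*} [Finite ι] {f : ι → CMSO R} :
    Sat S s1 s2 (iOr f) ↔ ∃ i, Sat S s1 s2 (f i) := by
  suffices ∀ l : List ι,
      Sat S s1 s2 ((l.map f).foldr CMSO.or CMSO.ff) ↔ ∃ i ∈ l, Sat S s1 s2 (f i) by
    simp [iOr, this, Fintype.complete]
  intro l
  induction l with
  | nil => simp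
  | cons a l ih => simp [ih]

@[simp] theorem sat_iAnd {ι : Type*} [Finite ι] {f : ι → CMSO R} :
    Sat S s1 s2 (iAnd f) ↔ ∀ i, Sat S s1 s2 (f i) := by
  simp [iAnd]

theorem sat_bigAll {l : List ℕ} {φ : CMSO R} :
    Sat S s1 s2 (bigAll l φ) ↔
      ∀ t1 : ℕ → S.U, (∀ x ∉ l, t1 x = s1 x) → Sat S t1 s2 φ := by
  induction l generalizing s1 with
  | nil =>
    exact ⟨fun h t1 ht => funext (fun x => ht x List.not_mem_nil) ▸ h,
      fun h => h s1 fun _ _ => rfl⟩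
  | cons a l ih =>
    simp only [bigAll, List.foldr_cons, sat_all] at ih ⊢
    simp only [ih]
    constructor
    · intro h t1 ht
      refine h (t1 a) t1 fun x hx => ?_
      rcases eq_or_ne x a with rfl | hxa
      · simp
      · rw [update_of_ne hxa]; exact ht x (List.not_mem_cons_of_ne_of_not_mem hxa hx)
    · intro h u t1 ht
      refine h t1 fun x hx => ?_
      rw [ht x (fun h => hx (List.mem_cons_of_mem a h)), update_of_ne (List.ne_of_not_mem_cons hx)]

theorem sat_bigExSO {l : List ℕ} {φ : CMSO R} :
    Sat S s1 s2 (bigExSO l φ) ↔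
      ∃ t2 : ℕ → Set S.U, (∀ X ∉ l, t2 X = s2 X) ∧ Sat S s1 t2 φ := by
  induction l generalizing s2 with
  | nil =>
    exact ⟨fun h => ⟨s2, fun _ _ => rfl, h⟩,
      fun ⟨t2, ht, h⟩ => funext (fun X => ht X List.not_mem_nil) ▸ h⟩
  | cons a l ih =>
    simp only [bigExSO, List.foldr_cons, sat_exSO] at ih ⊢
    simp only [ih]
    constructor
    · rintro ⟨V, t2, ht, h⟩
      refine ⟨t2, fun X hX => ?_, h⟩
      rw [ht X (fun h => hX (List.mem_cons_of_mem a h)), update_of_ne (List.ne_of_not_mem_cons hX)]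
    · rintro ⟨t2, ht, h⟩
      refine ⟨t2 a, t2, fun X hX => ?_, h⟩
      rcases eq_or_ne X a with rfl | hXa
      · simp
      · rw [update_of_ne hXa]; exact ht X (List.not_mem_cons_of_ne_of_not_mem hXa hX)

theorem sat_congr_freeFO {φ : CMSO R} {t1 : ℕ → S.U} (h : ∀ x ∈ freeFO φ, s1 x = t1 x) :
    Sat S s1 s2 φ ↔ Sat S t1 s2 φ := by
  induction φ generalizing s1 t1 s2 with
  | eq x y => simp [h x (by simp [freeFO]), h y (by simp [freeFO])]
  | rel r xs =>
    show S.rel r _ ↔ S.rel r _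
    rw [funext fun i => h (xs i) (by simp [freeFO])]
  | mem X x => simp [h x (by simp [freeFO])]
  | card X q p => exact Iff.rfl
  | not φ ih => exact not_congr (ih h)
  | and φ ψ ihφ ihψ =>
    exact and_congr (ihφ fun x hx => h x (by simp [freeFO, hx]))
      (ihψ fun x hx => h x (by simp [freeFO, hx]))
  | exFO x φ ih =>
    refine exists_congr fun u => ih fun y hy => ?_
    rcases eq_or_ne y x with rfl | hyx
    · simp
    · simp only [update_of_ne hyx]
      exact h y (by simp [freeFO, hyx, hy])
  | exSO X φ ih => exact exists_congr fun V => ih h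

theorem sat_rename {fF fS : ℕ → ℕ} (hF : Injective fF) (hS : Injective fS) {φ : CMSO R} :
    Sat S s1 s2 (rename fF fS φ) ↔ Sat S (s1 ∘ fF) (s2 ∘ fS) φ := by
  induction φ generalizing s1 s2 with
  | eq x y => exact Iff.rfl
  | rel r xs => exact Iff.rfl
  | mem X x => exact Iff.rfl
  | card X q p => exact Iff.rfl
  | not φ ih => exact not_congr ih
  | and φ ψ ihφ ihψ => exact and_congr ihφ ihψ
  | exFO x φ ih => simp only [rename, sat_exFO, ih, update_comp_eq_of_injective _ hF]
  | exSO X φ ih => simp only [rename, sat_exSO, ih, update_comp_eq_of_injective _ hS]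

theorem sat_closeFrom {A : ℕ} {φ : CMSO R} :
    Sat S s1 s2 (closeFrom A φ) ↔
      ∀ t1 : ℕ → S.U, (∀ x < A, t1 x = s1 x) → Sat S t1 s2 φ := by
  rw [closeFrom, sat_bigAll]
  simp only [List.mem_range'_1, not_and_or, not_le, not_lt]
  constructor
  · intro h t1 ht
    refine (sat_congr_freeFO fun x hx => ?_).mp
      (h (fun x => if x < freeBound φ then t1 x else s1 x) fun x hx => ?_)
    · simp [lt_freeBound hx]
    · split_ifs with hxφ
      · exact ht x (by omega)
      · rfl
  · exact fun h t1 ht => h t1 fun x hx => ht x (Or.inl hx)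

theorem sat_instantiate {A : ℕ} {args : Fin A → ℕ} {θ : CMSO R} :
    Sat S s1 s2 (instantiate A args θ) ↔
      ∀ t1 : ℕ → S.U, (∀ j : Fin A, t1 j = s1 (args j)) →
        Sat S t1 (fun X => s2 (2 * X)) θ := by
  simp only [instantiate]
  set C := Finset.univ.sup args + 1
  set N := max (freeBound θ) A
  have hargs : ∀ j, args j < C := fun j => Nat.lt_succ_of_le (Finset.le_sup (Finset.mem_univ j))
  simp only [sat_bigAll, List.mem_range'_1, sat_imp, sat_iAnd, sat_eq,
    sat_rename (add_left_injective C) (mul_right_injective₀ two_ne_zero)]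
  constructor
  · intro h t1 ht1
    -- shift `t1` into the block of fresh variables `C, …, C + N - 1`
    let t1' : ℕ → S.U := fun x => if C ≤ x ∧ x < C + N then t1 (x - C) else s1 x
    have ht1' : ∀ x < N, t1' (x + C) = t1 x := fun x hx => by simp [t1', hx, Nat.add_comm C]
    refine (sat_congr_freeFO fun x hx => ?_).mp (h t1' (fun x hx => if_neg hx) fun j => ?_)
    · exact ht1' x (lt_of_lt_of_le (lt_freeBound hx) (le_max_left _ _))
    · rw [ht1' j (lt_of_lt_of_le j.2 (le_max_right _ _)), ht1 j]
      exact (if_neg (by have := hargs j; omega)).symm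
  · intro h t1 hoff hpin
    exact h _ fun j => (hpin j).trans (hoff _ (by have := hargs j; omega))

end Semantics

namespace TScheme

variable {R R' : RSig}

def Survives (Θ : TScheme R R') (S : Struc R) (P : ℕ → Set S.U) (u : S.U) (i : Fin Θ.k) :
    Prop :=
  ∀ s1 : ℕ → S.U, Sat S (update s1 0 u) P (Θ.univ i)

end TScheme

section Isomorphism

variable {R R' : RSig}

theorem SIso.refl (S : Struc R) : SIso S S := ⟨Equiv.refl _, fun _ _ => Iff.rfl⟩

theorem SIso.symm {S₁ S₂ : Struc R} (h : SIso S₁ S₂) : SIso S₂ S₁ := by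
  obtain ⟨e, he⟩ := h
  exact ⟨e.symm, fun q f => by simpa using (he q (fun i => e.symm (f i))).symm⟩

theorem SIso.trans {S₁ S₂ S₃ : Struc R} (h : SIso S₁ S₂) (h' : SIso S₂ S₃) :
    SIso S₁ S₃ := by
  obtain ⟨e, he⟩ := h
  obtain ⟨e', he'⟩ := h'
  exact ⟨e.trans e', fun q f => (he q f).trans (he' q _)⟩

variable {S₁ S₂ : Struc R} (e : S₁.U ≃ S₂.U)

def IsRelEquiv : Prop :=
  ∀ (q : R.Sym) (f : Fin (R.arity q) → S₁.U), S₁.rel q f ↔ S₂.rel q (fun i => e (f i))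

theorem sat_equiv (he : IsRelEquiv e)
    (φ : CMSO R) (s1 : ℕ → S₁.U) (s2 : ℕ → Set S₁.U) :
    Sat S₁ s1 s2 φ ↔ Sat S₂ (e ∘ s1) (Set.image e ∘ s2) φ := by
  induction φ generalizing s1 s2 with
  | eq x y => exact e.apply_eq_iff_eq.symm
  | rel r xs => exact he r _
  | mem X x => exact e.injective.mem_set_image.symm
  | card X q p => simp [Nat.card_image_of_injective e.injective]
  | not φ ih => exact not_congr (ih _ _)
  | and φ ψ ihφ ihψ => exact and_congr (ihφ _ _) (ihψ _ _)
  | exFO x φ ih =>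
    simp only [sat_exFO, ih, comp_update]
    exact e.exists_congr fun _ => Iff.rfl
  | exSO X φ ih =>
    simp only [sat_exSO, ih, comp_update]
    exact (Equiv.Set.congr e).exists_congr fun _ => Iff.rfl

theorem modelsP_equiv (he : IsRelEquiv e)
    (P : ℕ → Set S₁.U) (φ : CMSO R) :
    ModelsP S₁ P φ ↔ ModelsP S₂ (Set.image e ∘ P) φ :=
  ((Equiv.refl ℕ).arrowCongr e).forall_congr fun s1 => sat_equiv e he φ s1 P

theorem TScheme.survives_equiv (he : IsRelEquiv e)
    (Θ : TScheme R R') (P : ℕ → Set S₁.U) (u : S₁.U) (i : Fin Θ.k) :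
    Θ.Survives S₁ P u i ↔ Θ.Survives S₂ (Set.image e ∘ P) (e u) i :=
  ((Equiv.refl ℕ).arrowCongr e).forall_congr fun s1 => by
    rw [sat_equiv e he, comp_update]
    rfl

theorem siso_tOut_of_equiv (he : IsRelEquiv e)
    (Θ : TScheme R R') (P : ℕ → Set S₁.U) :
    SIso (TOut Θ S₁ P) (TOut Θ S₂ (Set.image e ∘ P)) := by
  refine ⟨(e.prodCongr (Equiv.refl _)).subtypeEquiv fun p => Θ.survives_equiv e he P p.1 p.2,
    fun q f => ((Equiv.refl ℕ).arrowCongr e).forall_congr fun s1 => ?_⟩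
  exact imp_congr (forall_congr' fun j => e.apply_eq_iff_eq.symm) (sat_equiv e he _ s1 P)

theorem TRel.of_siso {Θ : TScheme R R'} {S' : Struc R'} (h : SIso S₁ S₂)
    (h' : TRel Θ S₂ S') : TRel Θ S₁ S' := by
  obtain ⟨e, he⟩ := h.symm
  obtain ⟨P, hP, hiso⟩ := h'
  exact ⟨Set.image e ∘ P, (modelsP_equiv e he P Θ.dom).mp hP,
    (siso_tOut_of_equiv e he Θ P).symm.trans hiso⟩

end Isomorphism

section Counting

theorem exists_mul_add_iff {n q p : ℕ} :
    (∃ K, n = K * q + p) ↔ p ≤ n ∧ n ≡ p [MOD q] := by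
  constructor
  · rintro ⟨K, rfl⟩
    exact ⟨Nat.le_add_left p _, by simp [Nat.ModEq]⟩
  · rintro ⟨hle, hmod⟩
    obtain ⟨K, hK⟩ := (Nat.modEq_iff_dvd' hle).mp hmod.symm
    exact ⟨K, by rw [Nat.mul_comm]; omega⟩

theorem exists_mul_add_sum_iff {ι : Type*} [Fintype ι] (q p : ℕ) (n : ι → ℕ) :
    (∃ K, ∑ i, n i = K * q + p) ↔
      ∃ r : ι → Fin (p + q + 1), (∃ K, ∑ i, (r i : ℕ) = K * q + p) ∧
        ∀ i, ∃ K, n i = K * q + r i := by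
  constructor
  · rintro ⟨K, hK⟩
    -- the residue of `m`: `m` itself up to `p`, and otherwise the representative in `(p, p + q]`
    let ρ : ℕ → ℕ := fun m => if m ≤ p then m else p + 1 + (m - p - 1) % q
    have hρ : ∀ m, ∃ K, m = K * q + ρ m := fun m => by
      by_cases hm : m ≤ p
      · exact ⟨0, by simp [ρ, hm]⟩
      · refine ⟨(m - p - 1) / q, ?_⟩
        have := Nat.div_add_mod (m - p - 1) q
        simp only [ρ, hm, if_false]
        rw [Nat.mul_comm]
        omega
    have hq : ∀ i, p < n i → 0 < q := fun i hi => by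
      by_contra hq
      have := Finset.single_le_sum (fun j _ => Nat.zero_le (n j)) (Finset.mem_univ i)
      simp only [Nat.eq_zero_of_not_pos hq, Nat.mul_zero, Nat.zero_add] at hK
      omega
    refine ⟨fun i => ⟨ρ (n i), ?_⟩, ?_, fun i => hρ (n i)⟩
    · by_cases hi : n i ≤ p
      · simp only [ρ, hi, if_true]; omega
      · have := Nat.mod_lt (n i - p - 1) (hq i (by omega))
        simp only [ρ, hi, if_false]; omega
    · refine exists_mul_add_iff.mpr ⟨?_, ?_⟩
      · by_cases hall : ∀ i, n i ≤ p
        · simp only [ρ, hall, if_true]; omega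
        · obtain ⟨i, hi⟩ := not_forall.mp hall
          have := Finset.single_le_sum (fun j _ => Nat.zero_le (ρ (n j))) (Finset.mem_univ i)
          simp only [ρ, hi, if_false] at this
          exact le_trans (by omega) this
      · have hmod : ∀ m, ρ m ≡ m [MOD q] := fun m =>
          (exists_mul_add_iff.mp (hρ m)).2.symm
        exact (Nat.ModEq.sum fun i _ => hmod (n i)).trans (exists_mul_add_iff.mp ⟨K, hK⟩).2
  · rintro ⟨r, ⟨K, hK⟩, hr⟩
    choose Ks hKs using hr
    refine ⟨∑ i, Ks i + K, ?_⟩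
    rw [Finset.sum_congr rfl fun i _ => hKs i, Finset.sum_add_distrib, ← Finset.sum_mul, hK]
    ring

end Counting

/-- A set variable `X` over `TOut Θ S P` is represented over `S` by one set variable `slice X i`
per copy `i`; slices are odd, the even set variables being the parameters `P`. -/
def slice {k : ℕ} (X : ℕ) (i : Fin k) : ℕ := 2 * Nat.pair X i + 1

theorem slice_ne_two_mul {k : ℕ} (X : ℕ) (i : Fin k) (n : ℕ) : slice X i ≠ 2 * n := by
  unfold slice; omega

theorem slice_inj {k : ℕ} {X Y : ℕ} {i j : Fin k} :
    slice X i = slice Y j ↔ X = Y ∧ i = j := by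
  simp [slice, Nat.pair_eq_pair, Fin.val_inj]

namespace TScheme

variable {R R' : RSig} (Θ : TScheme R R')

noncomputable def survivesAt (i : Fin Θ.k) (x : ℕ) : CMSO R :=
  instantiate 1 (fun _ => x) (Θ.univ i)

def decode (S : Struc R) (P : ℕ → Set S.U) (s2 : ℕ → Set S.U) :
    ℕ → Set (TOut Θ S P).U :=
  fun X => {m | m.1.1 ∈ s2 (slice X m.1.2)}

/-- The auxiliary set variable `slice X i + 2` is odd and differs from `slice X i`, the only other
set variables of the body. -/
noncomputable def sliceCard (X : ℕ) (i : Fin Θ.k) (q r : ℕ) : CMSO R :=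
  .exSO (slice X i + 2) (.and
    (CMSO.all 0 ((CMSO.mem (slice X i + 2) 0).iff (.and (.mem (slice X i) 0) (Θ.survivesAt i 0))))
    (.card (slice X i + 2) q r))

noncomputable def cardTr (X q p : ℕ) : CMSO R :=
  iOr fun r : {r : Fin Θ.k → Fin (p + q + 1) // ∃ K, ∑ i, (r i : ℕ) = K * q + p} =>
    iAnd fun i => Θ.sliceCard X i q (r.1 i)

/-- The variable `x` stands for an element in copy `c x`. -/
noncomputable def backTr (c : ℕ → Fin Θ.k) : CMSO R' → CMSO R
  | .eq x y => if c x = c y then .eq x y else CMSO.ff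
  | .rel r xs => instantiate (R'.arity r) xs (Θ.rel r fun j => c (xs j))
  | .mem X x => .mem (slice X (c x)) x
  | .card X q p => Θ.cardTr X q p
  | .not φ => .not (backTr c φ)
  | .and φ ψ => .and (backTr c φ) (backTr c ψ)
  | .exFO x φ => iOr fun i => .exFO x (.and (Θ.survivesAt i x) (backTr (update c x i) φ))
  | .exSO X φ => bigExSO ((List.finRange Θ.k).map (slice X)) (backTr c φ)

/-- The variables `j < A` stand for copies `c j`. The outer quantification over a surviving
`(u, i)` supplies the copies of the other variables and makes the formula true when `TOut Θ S P`
is empty, as the closure then is. -/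
noncomputable def backTrClosed (A : ℕ) (c : Fin A → Fin Θ.k) (χ : CMSO R') : CMSO R :=
  iAnd fun i => CMSO.all A ((Θ.survivesAt i A).imp
    (Θ.backTr (fun x => if h : x < A then c ⟨x, h⟩ else i) (closeFrom A χ)))

variable {Θ} {S : Struc R} {P : ℕ → Set S.U}

theorem decode_eq_update {s2 t2 : ℕ → Set S.U} {X : ℕ}
    (h : ∀ Y, (∀ i : Fin Θ.k, slice X i ≠ Y) → t2 Y = s2 Y) :
    Θ.decode S P t2 = update (Θ.decode S P s2) X (Θ.decode S P t2 X) := by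
  funext Y
  rcases eq_or_ne Y X with rfl | hYX
  · rw [update_self]
  · rw [update_of_ne hYX]
    ext m
    simp only [decode, Set.mem_ofPred_eq]
    rw [h _ fun i hi => hYX (slice_inj.mp hi).1.symm]

theorem exists_decode_eq (s2 : ℕ → Set S.U) (X : ℕ) (V : Set (TOut Θ S P).U) :
    ∃ t2 : ℕ → Set S.U, (∀ Y, (∀ i : Fin Θ.k, slice X i ≠ Y) → t2 Y = s2 Y) ∧
      Θ.decode S P t2 X = V := by
  classical
  refine ⟨fun Y => if ∀ i : Fin Θ.k, slice X i ≠ Y then s2 Y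
    else {u | ∃ m ∈ V, m.1.1 = u ∧ slice X m.1.2 = Y}, fun Y hY => if_pos hY, ?_⟩
  ext m
  simp only [decode, Set.mem_ofPred_eq, ne_eq, slice_inj, true_and]
  rw [if_neg fun h => h _ rfl]
  constructor
  · rintro ⟨m', hm', h1, h2⟩
    rwa [Subtype.ext (Prod.ext h1 h2)] at hm'
  · exact fun hm => ⟨m, hm, rfl, rfl⟩

theorem exists_even_eq_and_decode_eq (W : ℕ → Set (TOut Θ S P).U) :
    ∃ s2 : ℕ → Set S.U, (∀ n, s2 (2 * n) = P n) ∧ Θ.decode S P s2 = W := by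
  refine ⟨fun Y => {u | (∃ n, 2 * n = Y ∧ u ∈ P n) ∨
    ∃ n, ∃ m ∈ W n, m.1.1 = u ∧ slice n m.1.2 = Y}, fun n => ?_, ?_⟩
  · ext u
    simp [slice_ne_two_mul]
  · funext n
    ext m
    simp only [decode, Set.mem_ofPred_eq, slice_inj, (slice_ne_two_mul _ _ _).symm, false_and,
      exists_false, false_or]
    constructor
    · rintro ⟨_, m', hm', h1, rfl, h2⟩
      rwa [Subtype.ext (Prod.ext h1 h2)] at hm'
    · exact fun hm => ⟨n, m, hm, rfl, rfl, rfl⟩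

variable {s1 : ℕ → S.U} {s2 : ℕ → Set S.U}

theorem sat_survivesAt (hP : ∀ n, s2 (2 * n) = P n) {i : Fin Θ.k} {x : ℕ} :
    Sat S s1 s2 (Θ.survivesAt i x) ↔ Θ.Survives S P (s1 x) i := by
  rw [survivesAt, sat_instantiate, show (fun X => s2 (2 * X)) = P from funext hP]
  constructor
  · exact fun h t1 => h _ fun j => by simp [Fin.fin_one_eq_zero j]
  · intro h t1 ht
    simpa [← ht 0] using h t1

theorem sat_sliceCard (hP : ∀ n, s2 (2 * n) = P n) {X : ℕ} {i : Fin Θ.k} {q r : ℕ} :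
    Sat S s1 s2 (Θ.sliceCard X i q r) ↔
      ∃ K, Nat.card {u | u ∈ s2 (slice X i) ∧ Θ.Survives S P u i} = K * q + r := by
  have hP' : ∀ V n, update s2 (slice X i + 2) V (2 * n) = P n := fun V n => by
    rw [update_of_ne (by unfold slice; omega), hP]
  simp only [sliceCard, sat_exSO, sat_and, sat_all, sat_iff, sat_mem, sat_survivesAt (hP' _),
    sat_card, update_self, update_of_ne (show slice X i ≠ slice X i + 2 by omega)]
  constructor
  · rintro ⟨V, hV, hcard⟩
    rwa [Set.ext hV] at hcard
  · exact fun h => ⟨_, fun _ => Iff.rfl, h⟩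

theorem card_decode (X : ℕ) :
    Nat.card (Θ.decode S P s2 X) =
      ∑ i, Nat.card {u | u ∈ s2 (slice X i) ∧ Θ.Survives S P u i} := by
  have := S.finU
  rw [← Nat.card_sigma]
  exact Nat.card_congr
    { toFun := fun m => ⟨m.1.1.2, m.1.1.1, m.2, m.1.2⟩
      invFun := fun m => ⟨⟨(m.2.1, m.1), m.2.2.2⟩, m.2.2.1⟩
      left_inv := fun _ => rfl
      right_inv := fun _ => rfl }

theorem sat_cardTr (hP : ∀ n, s2 (2 * n) = P n) {X q p : ℕ} :
    Sat S s1 s2 (Θ.cardTr X q p) ↔ ∃ K, Nat.card (Θ.decode S P s2 X) = K * q + p := by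
  rw [card_decode, exists_mul_add_sum_iff]
  simp [cardTr, sat_sliceCard hP]

theorem sat_bigExSO_slice (hP : ∀ n, s2 (2 * n) = P n) {X : ℕ} {ψ : CMSO R}
    {Φ : (ℕ → Set (TOut Θ S P).U) → Prop}
    (h : ∀ t2 : ℕ → Set S.U, (∀ n, t2 (2 * n) = P n) → (Sat S s1 t2 ψ ↔ Φ (Θ.decode S P t2))) :
    Sat S s1 s2 (bigExSO ((List.finRange Θ.k).map (slice X)) ψ) ↔
      ∃ V, Φ (update (Θ.decode S P s2) X V) := by
  have hP' : ∀ t2 : ℕ → Set S.U, (∀ Y, (∀ i : Fin Θ.k, slice X i ≠ Y) → t2 Y = s2 Y) →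
      ∀ n, t2 (2 * n) = P n := fun t2 ht2 n =>
    (ht2 _ fun i => slice_ne_two_mul X i n).trans (hP n)
  simp only [sat_bigExSO, List.mem_map, List.mem_finRange, true_and, not_exists]
  constructor
  · rintro ⟨t2, ht2, h2⟩
    exact ⟨_, decode_eq_update ht2 ▸ (h t2 (hP' t2 ht2)).mp h2⟩
  · rintro ⟨V, hV⟩
    obtain ⟨t2, ht2, rfl⟩ := exists_decode_eq s2 X V
    exact ⟨t2, ht2, (h t2 (hP' t2 ht2)).mpr (decode_eq_update ht2 ▸ hV)⟩

theorem sat_backTr (φ : CMSO R') {c : ℕ → Fin Θ.k} (hP : ∀ n, s2 (2 * n) = P n)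
    {s1' : ℕ → (TOut Θ S P).U}
    (h1 : ∀ x ∈ freeFO φ, (s1' x).1 = (s1 x, c x)) :
    Sat S s1 s2 (Θ.backTr c φ) ↔ Sat (TOut Θ S P) s1' (Θ.decode S P s2) φ := by
  induction φ generalizing c s1 s2 s1' with
  | eq x y =>
    rw [sat_eq, show s1' x = s1' y ↔ (s1' x).1 = (s1' y).1 from Subtype.ext_iff,
      h1 x (by simp [freeFO]), h1 y (by simp [freeFO]), Prod.ext_iff]
    simp only [backTr]
    split_ifs with hc <;> simp [hc]
  | rel r xs =>
    simp only [backTr, sat_instantiate, show (fun X => s2 (2 * X)) = P from funext hP]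
    show _ ↔ ∀ t1 : ℕ → S.U, _ → _
    simp only [fun j => h1 (xs j) (by simp [freeFO])]
  | mem X x =>
    simp only [backTr, sat_mem, decode, Set.mem_ofPred_eq, h1 x (by simp [freeFO])]
  | card X q p => exact sat_cardTr hP
  | not φ ih => exact not_congr (ih hP h1)
  | and φ ψ ihφ ihψ =>
    exact and_congr (ihφ hP fun x hx => h1 x (by simp [freeFO, hx]))
      (ihψ hP fun x hx => h1 x (by simp [freeFO, hx]))
  | exFO x φ ih =>
    have h1' : ∀ m : (TOut Θ S P).U, ∀ y ∈ freeFO φ,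
        (update s1' x m y).1 = (update s1 x m.1.1 y, update c x m.1.2 y) := fun m y hy => by
      rcases eq_or_ne y x with rfl | hyx
      · simp
      · simp only [update_of_ne hyx]
        exact h1 y (by simp [freeFO, hyx, hy])
    simp only [backTr, sat_iOr, sat_exFO, sat_and, sat_survivesAt hP, update_self]
    constructor
    · rintro ⟨i, u, hu, h⟩
      exact ⟨⟨(u, i), hu⟩, (ih hP (h1' ⟨(u, i), hu⟩)).mp h⟩
    · rintro ⟨m, h⟩
      exact ⟨m.1.2, m.1.1, m.2, (ih hP (h1' m)).mpr h⟩
  | exSO X φ ih =>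
    exact sat_bigExSO_slice hP (Φ := fun s2' => Sat (TOut Θ S P) s1' s2' φ) fun t2 ht2 =>
      ih ht2 h1

theorem sat_backTrClosed (hP : ∀ n, s2 (2 * n) = P n) {A : ℕ} {c : Fin A → Fin Θ.k}
    {χ : CMSO R'} (hc : ∀ j : Fin A, Θ.Survives S P (s1 j) (c j)) :
    Sat S s1 s2 (Θ.backTrClosed A c χ) ↔ ∀ s1' : ℕ → (TOut Θ S P).U,
      (∀ j : Fin A, (s1' j).1 = (s1 j, c j)) → Sat (TOut Θ S P) s1' (Θ.decode S P s2) χ := by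
  have key : ∀ s1' : ℕ → (TOut Θ S P).U, (∀ j : Fin A, (s1' j).1 = (s1 j, c j)) →
      ∀ m : (TOut Θ S P).U, Sat S (update s1 A m.1.1) s2
        (Θ.backTr (fun x => if h : x < A then c ⟨x, h⟩ else m.1.2) (closeFrom A χ)) ↔
        ∀ t1 : ℕ → (TOut Θ S P).U, (∀ x < A, t1 x = s1' x) →
          Sat (TOut Θ S P) t1 (Θ.decode S P s2) χ := by
    intro s1' hs1' m
    rw [sat_backTr _ hP fun x hx => ?_, sat_closeFrom]
    have hxA := lt_of_mem_freeFO_closeFrom hx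
    simpa [hxA, update_of_ne hxA.ne] using hs1' ⟨x, hxA⟩
  simp only [backTrClosed, sat_iAnd, sat_all, sat_imp, sat_survivesAt hP, update_self]
  constructor
  · intro h s1' hs1'
    exact (key s1' hs1' (s1' 0)).mp (h _ _ (s1' 0).2) s1' fun _ _ => rfl
  · intro h i u hu
    let s1' : ℕ → (TOut Θ S P).U := fun x =>
      if hx : x < A then ⟨(s1 x, c ⟨x, hx⟩), hc ⟨x, hx⟩⟩ else ⟨(u, i), hu⟩
    have hs1' : ∀ j : Fin A, (s1' j).1 = (s1 j, c j) := fun j => by simp [s1', j.2]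
    exact (key s1' hs1' ⟨(u, i), hu⟩).mpr fun t1 ht1 =>
      h t1 fun j => (congrArg Subtype.val (ht1 j j.2)).trans (hs1' j)

end TScheme

namespace TScheme

variable {R R' R'' : RSig}

/-- Copy `(i, j)` of the composite is copy `j` of the second scheme applied to copy `i` of the
first; the parameters of `Θ₁` sit at even positions and those of `Θ₂` in slices. -/
noncomputable def comp (Θ₁ : TScheme R R') (Θ₂ : TScheme R' R'') : TScheme R R'' where
  k := Θ₁.k * Θ₂.k
  dom := .and (rename id (2 * ·) Θ₁.dom) (Θ₁.backTrClosed 0 Fin.elim0 Θ₂.dom)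
  univ t := .and (Θ₁.survivesAt (finProdFinEquiv.symm t).1 0)
    (Θ₁.backTrClosed 1 (fun _ => (finProdFinEquiv.symm t).1)
      (Θ₂.univ (finProdFinEquiv.symm t).2))
  rel q g := Θ₁.backTrClosed _ (fun j => (finProdFinEquiv.symm (g j)).1)
    (Θ₂.rel q fun j => (finProdFinEquiv.symm (g j)).2)

variable {Θ₁ : TScheme R R'} {Θ₂ : TScheme R' R''} {S : Struc R} {Penc P₁ : ℕ → Set S.U}

theorem modelsP_comp_dom (hP : ∀ n, Penc (2 * n) = P₁ n) :
    ModelsP S Penc (Θ₁.comp Θ₂).dom ↔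
      ModelsP S P₁ Θ₁.dom ∧
        ModelsP (TOut Θ₁ S P₁) (Θ₁.decode S P₁ Penc) Θ₂.dom := by
  have hdom₁ : ∀ s1, Sat S s1 Penc (rename id (2 * ·) Θ₁.dom) ↔ Sat S s1 P₁ Θ₁.dom := by
    intro s1
    rw [sat_rename injective_id (mul_right_injective₀ two_ne_zero),
      show Penc ∘ (2 * ·) = P₁ from funext hP]
    rfl
  have hdom₂ : ∀ s1, Sat S s1 Penc (Θ₁.backTrClosed 0 Fin.elim0 Θ₂.dom) ↔
      ModelsP (TOut Θ₁ S P₁) (Θ₁.decode S P₁ Penc) Θ₂.dom := fun s1 =>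
    (sat_backTrClosed hP fun j => j.elim0).trans (by simp [ModelsP])
  show (∀ s1, Sat S s1 Penc (.and _ _)) ↔ _
  simp only [sat_and, hdom₁, hdom₂]
  constructor
  · exact fun h => ⟨fun s1 => (h s1).1, fun s1' => (h fun x => (s1' x).1.1).2 s1'⟩
  · exact fun h s1 => ⟨h.1 s1, h.2⟩

theorem survives_comp (hP : ∀ n, Penc (2 * n) = P₁ n) (u : S.U)
    (ij : Fin Θ₁.k × Fin Θ₂.k) :
    (Θ₁.comp Θ₂).Survives S Penc u (finProdFinEquiv ij) ↔
      ∃ h : Θ₁.Survives S P₁ u ij.1,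
        Θ₂.Survives (TOut Θ₁ S P₁) (Θ₁.decode S P₁ Penc) ⟨(u, ij.1), h⟩ ij.2 := by
  simp only [Survives, comp, Equiv.symm_apply_apply, sat_and, sat_survivesAt hP, update_self]
  have hc : ∀ (s1 : ℕ → S.U), Θ₁.Survives S P₁ u ij.1 →
      ∀ j : Fin 1, Θ₁.Survives S P₁ (update s1 0 u j) ij.1 := fun s1 hu j => by
    simpa [Fin.fin_one_eq_zero j] using hu
  constructor
  · intro h
    have hu := (h fun _ => u).1
    exact ⟨hu, fun s1' => (sat_backTrClosed hP (hc _ hu)).mp (h fun _ => u).2 _ fun j => by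
      rw [Fin.val_eq_zero, update_self]
      exact congrArg Subtype.val (update_self (0 : ℕ) _ s1')⟩
  · rintro ⟨hu, h⟩ s1
    refine ⟨hu, (sat_backTrClosed hP (hc s1 hu)).mpr fun s1' hs1' => ?_⟩
    have : s1' 0 = ⟨(u, ij.1), hu⟩ := Subtype.ext (by simpa using hs1' 0)
    simpa [← this] using h s1'

def compEquiv (hP : ∀ n, Penc (2 * n) = P₁ n) :
    (TOut (Θ₁.comp Θ₂) S Penc).U ≃
      (TOut Θ₂ (TOut Θ₁ S P₁) (Θ₁.decode S P₁ Penc)).U where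
  toFun a :=
    have h := (survives_comp hP a.1.1 (finProdFinEquiv.symm a.1.2)).mp
      (by have := a.2; rwa [← Equiv.apply_symm_apply finProdFinEquiv a.1.2] at this)
    ⟨(⟨(a.1.1, (finProdFinEquiv.symm a.1.2).1), h.fst⟩, (finProdFinEquiv.symm a.1.2).2),
      h.snd⟩
  invFun b := ⟨(b.1.1.1.1, finProdFinEquiv (b.1.1.1.2, b.1.2)),
    (survives_comp hP _ _).mpr ⟨b.1.1.2, b.2⟩⟩
  left_inv a := Subtype.ext (Prod.ext rfl (finProdFinEquiv.apply_symm_apply _))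
  right_inv b := Subtype.ext (Prod.ext (Subtype.ext (Prod.ext rfl (by simp))) (by simp))

theorem siso_tOut_comp (hP : ∀ n, Penc (2 * n) = P₁ n) :
    SIso (TOut (Θ₁.comp Θ₂) S Penc)
      (TOut Θ₂ (TOut Θ₁ S P₁) (Θ₁.decode S P₁ Penc)) := by
  refine ⟨compEquiv hP, fun q f => ?_⟩
  have hc : ∀ s1 : ℕ → S.U, (∀ j : Fin (R''.arity q), s1 j = (f j).1.1) →
      ∀ j : Fin (R''.arity q), Θ₁.Survives S P₁ (s1 j) (finProdFinEquiv.symm (f j).1.2).1 :=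
    fun s1 hs1 j => (hs1 j) ▸ (compEquiv hP (f j)).1.1.2
  constructor
  · intro h s1' hs1'
    have hs1 : ∀ j : Fin (R''.arity q), (s1' j).1.1 = (f j).1.1 := fun j => by rw [hs1' j]; rfl
    let s1 : ℕ → S.U := fun x => (s1' x).1.1
    exact (sat_backTrClosed hP (hc s1 hs1)).mp (h s1 hs1) s1' fun j =>
      Prod.ext rfl (by rw [hs1' j]; rfl)
  · intro h s1 hs1
    exact (sat_backTrClosed hP (hc s1 hs1)).mpr fun s1' hs1' =>
      h s1' fun j => Subtype.ext ((hs1' j).trans (by rw [hs1 j]; rfl))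

theorem tRel_comp_iff (S'' : Struc R'') :
    TRel (Θ₁.comp Θ₂) S S'' ↔ ∃ S', TRel Θ₁ S S' ∧ TRel Θ₂ S' S'' := by
  constructor
  · rintro ⟨Penc, hdom, hiso⟩
    have hP : ∀ n, Penc (2 * n) = (fun n => Penc (2 * n)) n := fun _ => rfl
    obtain ⟨h₁, h₂⟩ := (modelsP_comp_dom hP).mp hdom
    exact ⟨_, ⟨_, h₁, SIso.refl _⟩, ⟨_, h₂, (siso_tOut_comp hP).symm.trans hiso⟩⟩
  · rintro ⟨S', ⟨P₁, h₁, hiso₁⟩, h₂⟩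
    obtain ⟨P₂, h₂, hiso₂⟩ := h₂.of_siso hiso₁
    obtain ⟨Penc, hP, rfl⟩ := exists_even_eq_and_decode_eq P₂
    exact ⟨Penc, (modelsP_comp_dom hP).mpr ⟨h₁, h₂⟩, (siso_tOut_comp hP).trans hiso₂⟩

end TScheme

/-- The composition of two definable transductions between
relational structures is a definable transduction. -/
theorem defTrans_comp {R R' R'' : RSig}
    (δ₁ : Struc R → Struc R' → Prop) (δ₂ : Struc R' → Struc R'' → Prop)
    (h₁ : DefTrans δ₁) (h₂ : DefTrans δ₂) :
    DefTrans (fun S S'' => ∃ S', δ₁ S S' ∧ δ₂ S' S'') := by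
  obtain ⟨Θ₁, hΘ₁⟩ := h₁
  obtain ⟨Θ₂, hΘ₂⟩ := h₂
  exact ⟨Θ₁.comp Θ₂, fun S S'' => by simp only [hΘ₁, hΘ₂, TScheme.tRel_comp_iff]⟩

end GraphCF
end
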